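/- arXiv:2308.12684 — 8 statements merged into one kernel-verified Lean document; each statement's English description precedes it below -/
import Mathlib

section
/- Let γ : ℝ → EuclideanSpace ℝ (Fin 3) be a smooth curve, unit speed (‖γ'(t)‖ = 1 for all t), closed with period ℓ > 0 (γ(t + ℓ) = γ(t) for all t), and lying on the unit sphere (‖γ(t)‖ = 1 for all t). Then its curvature κ(t) = ‖γ''(t)‖ is nowhere zero, and the total torsion of γ vanishes: ∫₀^ℓ τ(t) dt = 0, where τ(t) = ⟨γ'(t) ×₃ γ''(t), γ'''(t)⟩ / ‖γ''(t)‖². -/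
/-!
For a unit-speed curve on the unit sphere, `γ`, `γ'` and `n = γ × γ'` form an orthonormal frame,
and differentiating `‖γ‖ = ‖γ'‖ = 1` gives `γ'' = -γ + κ n` with `κ = ⟪n, γ''⟫` the geodesic
curvature. Hence `‖γ''‖² = 1 + κ² > 0`, and since `γ' × γ'' = n + κ γ` and `n' = γ × γ''`, the
torsion is `τ = κ' / (1 + κ²) = (arctan κ)'`, which integrates to `0` over a period of `κ`.
-/

open scoped RealInnerProductSpace

/-- The torsion of a unit-speed curve in `ℝ³` with nowhere-vanishing curvature:
`τ(t) = ⟨γ'(t) ×₃ γ''(t), γ'''(t)⟩ / ‖γ''(t)‖²`. -/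
noncomputable def torsion3 (γ : ℝ → EuclideanSpace ℝ (Fin 3)) (t : ℝ) : ℝ :=
  (inner ℝ ((WithLp.equiv 2 (Fin 3 → ℝ)).symm
      (crossProduct (WithLp.equiv 2 (Fin 3 → ℝ) (deriv γ t))
        (WithLp.equiv 2 (Fin 3 → ℝ) (deriv (deriv γ) t))))
    (deriv (deriv (deriv γ)) t) : ℝ) / ‖deriv (deriv γ) t‖ ^ 2

open Matrix WithLp

local notation "E³" => EuclideanSpace ℝ (Fin 3)

noncomputable def EuclideanSpace.cross3 : E³ →L[ℝ] E³ →L[ℝ] E³ :=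
  LinearMap.toContinuousLinearMap <| LinearMap.toContinuousLinearMap.toLinearMap ∘ₗ
    (crossProduct.compl₁₂ (WithLp.linearEquiv 2 ℝ (Fin 3 → ℝ)).toLinearMap
      (WithLp.linearEquiv 2 ℝ (Fin 3 → ℝ)).toLinearMap).compr₂
      (WithLp.linearEquiv 2 ℝ (Fin 3 → ℝ)).symm.toLinearMap

local infixl:74 " ×₃ " => EuclideanSpace.cross3

namespace EuclideanSpace

@[simp]
theorem ofLp_cross3 (a b : E³) : ofLp (a ×₃ b) = ofLp a ⨯₃ ofLp b := rfl

theorem real_inner_eq_dotProduct {ι : Type*} [Fintype ι] (a b : EuclideanSpace ℝ ι) :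
    ⟪a, b⟫ = ofLp a ⬝ᵥ ofLp b := by
  rw [inner_eq_star_dotProduct, star_trivial, dotProduct_comm]

theorem cross3_self (a : E³) : a ×₃ a = 0 := by
  ext1; simp [cross_self]

theorem cross3_anticomm (a b : E³) : b ×₃ a = -(a ×₃ b) := by
  ext1; rw [ofLp_neg, ofLp_cross3, ofLp_cross3, cross_anticomm]

theorem inner_cross3_self_left (a b : E³) : ⟪a ×₃ b, a⟫ = 0 := by
  rw [real_inner_eq_dotProduct, ofLp_cross3, dotProduct_comm, dot_self_cross]

theorem inner_cross3_self_right (a b : E³) : ⟪a ×₃ b, b⟫ = 0 := by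
  rw [real_inner_eq_dotProduct, ofLp_cross3, dotProduct_comm, dot_cross_self]

theorem inner_cross3_cross3 (a b c d : E³) :
    ⟪a ×₃ b, c ×₃ d⟫ = ⟪a, c⟫ * ⟪b, d⟫ - ⟪a, d⟫ * ⟪b, c⟫ := by
  simp only [real_inner_eq_dotProduct, ofLp_cross3, cross_dot_cross]

theorem cross3_cross3 (a b c : E³) : a ×₃ (b ×₃ c) = ⟪a, c⟫ • b - ⟪a, b⟫ • c := by
  ext1; simp [real_inner_eq_dotProduct, cross_cross_eq_smul_sub_smul', dotProduct_comm]

theorem inner_cross3_smul (a b c d : E³) :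
    ⟪a ×₃ b, c⟫ • d = ⟪a, d⟫ • (b ×₃ c) + ⟪b, d⟫ • (c ×₃ a) + ⟪c, d⟫ • (a ×₃ b) := by
  ext i
  fin_cases i <;>
  · simp only [real_inner_eq_dotProduct, dotProduct, ofLp_cross3, cross_apply, Fin.isValue,
      Fin.sum_univ_three, cons_val_zero, cons_val_one, cons_val, Fin.zero_eta, Fin.mk_one,
      Fin.reduceFinMk, PiLp.smul_apply, smul_eq_mul, PiLp.add_apply]
    ring

theorem norm_cross3_sq_of_orthonormal {a b : E³} (ha : ‖a‖ = 1) (hb : ‖b‖ = 1)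
    (hab : ⟪a, b⟫ = 0) : ‖a ×₃ b‖ ^ 2 = 1 := by
  rw [← real_inner_self_eq_norm_sq, inner_cross3_cross3, real_inner_self_eq_norm_sq,
    real_inner_self_eq_norm_sq, ha, hb, hab]
  norm_num

theorem eq_inner_smul_add_inner_smul_add_inner_cross3_smul {a b : E³} (ha : ‖a‖ = 1)
    (hb : ‖b‖ = 1) (hab : ⟪a, b⟫ = 0) (d : E³) :
    d = ⟪a, d⟫ • a + ⟪b, d⟫ • b + ⟪a ×₃ b, d⟫ • (a ×₃ b) := by
  have hb_ab : b ×₃ (a ×₃ b) = a := by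
    rw [cross3_cross3, real_inner_self_eq_norm_sq, hb, real_inner_comm, hab]; simp
  have hab_a : (a ×₃ b) ×₃ a = b := by
    rw [cross3_anticomm, cross3_cross3, real_inner_self_eq_norm_sq, ha, hab]; simp
  simpa [norm_cross3_sq_of_orthonormal ha hb hab, hb_ab, hab_a] using
    inner_cross3_smul a b (a ×₃ b) d

theorem _root_.HasDerivAt.cross3 {f g : ℝ → E³} {f' g' : E³} {t : ℝ} (hf : HasDerivAt f f' t)
    (hg : HasDerivAt g g' t) :
    HasDerivAt (fun s ↦ f s ×₃ g s) (f t ×₃ g' + f' ×₃ g t) t :=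
  EuclideanSpace.cross3.hasDerivAt_of_bilinear (fun _ ↦ hf) (fun _ ↦ hg)

end EuclideanSpace

open EuclideanSpace

section SphericalFrame

variable {x T z : E³}

theorem eq_neg_add_inner_cross3_smul (hx : ‖x‖ = 1) (hT : ‖T‖ = 1) (hxT : ⟪x, T⟫ = 0)
    (hxz : ⟪x, z⟫ = -1) (hTz : ⟪T, z⟫ = 0) : z = -x + ⟪x ×₃ T, z⟫ • (x ×₃ T) := by
  conv_lhs => rw [eq_inner_smul_add_inner_smul_add_inner_cross3_smul hx hT hxT z]
  simp [hxz, hTz]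

theorem norm_sq_eq_one_add_inner_cross3_sq (hx : ‖x‖ = 1) (hT : ‖T‖ = 1) (hxT : ⟪x, T⟫ = 0)
    (hxz : ⟪x, z⟫ = -1) (hTz : ⟪T, z⟫ = 0) : ‖z‖ ^ 2 = 1 + ⟪x ×₃ T, z⟫ ^ 2 := by
  have hz := eq_neg_add_inner_cross3_smul hx hT hxT hxz hTz
  set u := ⟪x ×₃ T, z⟫
  rw [hz, norm_add_sq_real, norm_neg, norm_smul, mul_pow, norm_cross3_sq_of_orthonormal hx hT hxT,
    inner_neg_left, inner_smul_right, real_inner_comm, inner_cross3_self_left, hx]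
  simp

theorem cross3_eq_cross3_add_inner_smul (hx : ‖x‖ = 1) (hT : ‖T‖ = 1) (hxT : ⟪x, T⟫ = 0)
    (hxz : ⟪x, z⟫ = -1) (hTz : ⟪T, z⟫ = 0) : T ×₃ z = x ×₃ T + ⟪x ×₃ T, z⟫ • x := by
  have hz := eq_neg_add_inner_cross3_smul hx hT hxT hxz hTz
  set u := ⟪x ×₃ T, z⟫
  rw [hz, map_add, map_neg, map_smul, cross3_anticomm, cross3_cross3, real_inner_self_eq_norm_sq,
    hT, real_inner_comm, hxT]
  simp

end SphericalFrame

theorem inner_deriv_add_inner_deriv_eq_zero {F : Type*} [NormedAddCommGroup F]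
    [InnerProductSpace ℝ F] {f g : ℝ → F} {f' g' : F} {c t : ℝ} (hfg : ∀ s, ⟪f s, g s⟫ = c)
    (hf : HasDerivAt f f' t) (hg : HasDerivAt g g' t) : ⟪f t, g'⟫ + ⟪f', g t⟫ = 0 := by
  refine (hf.inner ℝ hg).unique ?_
  simpa only [hfg] using hasDerivAt_const t c

theorem inner_deriv_eq_zero_of_norm_eq {F : Type*} [NormedAddCommGroup F]
    [InnerProductSpace ℝ F] {f : ℝ → F} {f' : F} {c t : ℝ} (hf : ∀ s, ‖f s‖ = c)
    (hd : HasDerivAt f f' t) : ⟪f t, f'⟫ = 0 := by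
  have := inner_deriv_add_inner_deriv_eq_zero (c := c ^ 2)
    (fun s ↦ by rw [real_inner_self_eq_norm_sq, hf]) hd hd
  rw [real_inner_comm (f t)] at this
  linarith

theorem Function.Periodic.deriv {F : Type*} [NormedAddCommGroup F] [NormedSpace ℝ F]
    {f : ℝ → F} {c : ℝ} (hf : Function.Periodic f c) :
    Function.Periodic (deriv f) c := fun t ↦ by
  rw [← deriv_comp_add_const, hf.funext]

/-- For a unit-speed curve on the unit sphere this is its geodesic curvature. -/
noncomputable def geodesicCurvature (γ : ℝ → E³) (t : ℝ) : ℝ :=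
  ⟪γ t ×₃ deriv γ t, deriv (deriv γ) t⟫

section SphericalCurve

variable {γ : ℝ → E³}

theorem ContDiff.hasDerivAt_first_three_derivs (hγ : ContDiff ℝ 3 γ) (t : ℝ) :
    HasDerivAt γ (deriv γ t) t ∧ HasDerivAt (deriv γ) (deriv (deriv γ) t) t ∧
      HasDerivAt (deriv (deriv γ)) (deriv (deriv (deriv γ)) t) t :=
  ⟨(hγ.differentiable (by norm_num) t).hasDerivAt,
    ((hγ.deriv' (n := 2)).differentiable (by norm_num) t).hasDerivAt,
    (((hγ.deriv' (n := 2)).deriv' (n := 1)).differentiable (by norm_num) t).hasDerivAt⟩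

theorem inner_relations_of_unitSpeed_of_sphere (hγ : ContDiff ℝ 3 γ)
    (hunit : ∀ t, ‖deriv γ t‖ = 1) (hsphere : ∀ t, ‖γ t‖ = 1) (t : ℝ) :
    ⟪γ t, deriv γ t⟫ = 0 ∧ ⟪deriv γ t, deriv (deriv γ) t⟫ = 0 ∧
      ⟪γ t, deriv (deriv γ) t⟫ = -1 ∧ ⟪γ t, deriv (deriv (deriv γ)) t⟫ = 0 := by
  have hd := hγ.hasDerivAt_first_three_derivs
  have hγγ' (s : ℝ) : ⟪γ s, deriv γ s⟫ = 0 := inner_deriv_eq_zero_of_norm_eq hsphere (hd s).1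
  have hγ'γ'' : ⟪deriv γ t, deriv (deriv γ) t⟫ = 0 :=
    inner_deriv_eq_zero_of_norm_eq hunit (hd t).2.1
  have hγγ'' (s : ℝ) : ⟪γ s, deriv (deriv γ) s⟫ = -1 := by
    have := inner_deriv_add_inner_deriv_eq_zero hγγ' (hd s).1 (hd s).2.1
    rw [real_inner_self_eq_norm_sq, hunit] at this
    linarith
  have hγγ''' : ⟪γ t, deriv (deriv (deriv γ)) t⟫ = 0 := by
    have := inner_deriv_add_inner_deriv_eq_zero hγγ'' (hd t).1 (hd t).2.2
    rwa [hγ'γ'', add_zero] at this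
  exact ⟨hγγ' t, hγ'γ'', hγγ'' t, hγγ'''⟩

theorem norm_deriv_deriv_sq_eq_one_add_geodesicCurvature_sq (hγ : ContDiff ℝ 3 γ)
    (hunit : ∀ t, ‖deriv γ t‖ = 1) (hsphere : ∀ t, ‖γ t‖ = 1) (t : ℝ) :
    ‖deriv (deriv γ) t‖ ^ 2 = 1 + geodesicCurvature γ t ^ 2 := by
  obtain ⟨h₁, h₂, h₃, -⟩ := inner_relations_of_unitSpeed_of_sphere hγ hunit hsphere t
  exact norm_sq_eq_one_add_inner_cross3_sq (hsphere t) (hunit t) h₁ h₃ h₂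

theorem hasDerivAt_geodesicCurvature (hγ : ContDiff ℝ 3 γ) (t : ℝ) :
    HasDerivAt (geodesicCurvature γ) ⟪γ t ×₃ deriv γ t, deriv (deriv (deriv γ)) t⟫ t := by
  obtain ⟨h₀, h₁, h₂⟩ := hγ.hasDerivAt_first_three_derivs t
  refine ((h₀.cross3 h₁).inner ℝ h₂).congr_deriv ?_
  rw [cross3_self, add_zero, inner_cross3_self_right, add_zero]

theorem torsion3_eq_div (hγ : ContDiff ℝ 3 γ) (hunit : ∀ t, ‖deriv γ t‖ = 1)
    (hsphere : ∀ t, ‖γ t‖ = 1) (t : ℝ) :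
    torsion3 γ t =
      ⟪γ t ×₃ deriv γ t, deriv (deriv (deriv γ)) t⟫ / (1 + geodesicCurvature γ t ^ 2) := by
  obtain ⟨h₁, h₂, h₃, h₄⟩ := inner_relations_of_unitSpeed_of_sphere hγ hunit hsphere t
  rw [← norm_deriv_deriv_sq_eq_one_add_geodesicCurvature_sq hγ hunit hsphere t]
  change ⟪deriv γ t ×₃ deriv (deriv γ) t, _⟫ / _ = _
  rw [cross3_eq_cross3_add_inner_smul (hsphere t) (hunit t) h₁ h₃ h₂, inner_add_left,
    inner_smul_left, h₄, mul_zero, add_zero]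

theorem hasDerivAt_arctan_geodesicCurvature (hγ : ContDiff ℝ 3 γ)
    (hunit : ∀ t, ‖deriv γ t‖ = 1) (hsphere : ∀ t, ‖γ t‖ = 1) (t : ℝ) :
    HasDerivAt (fun s ↦ Real.arctan (geodesicCurvature γ s)) (torsion3 γ t) t := by
  rw [torsion3_eq_div hγ hunit hsphere, div_eq_inv_mul, ← one_div]
  exact (hasDerivAt_geodesicCurvature hγ t).arctan

theorem continuous_torsion3 (hγ : ContDiff ℝ 3 γ) (hκ : ∀ t, ‖deriv (deriv γ) t‖ ≠ 0) :
    Continuous (torsion3 γ) := by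
  have h₁ : Continuous (deriv γ) := hγ.continuous_deriv (by norm_num)
  have h₂ : Continuous (deriv (deriv γ)) := (hγ.deriv' (n := 2)).continuous_deriv (by norm_num)
  have h₃ : Continuous (deriv (deriv (deriv γ))) :=
    ((hγ.deriv' (n := 2)).deriv' (n := 1)).continuous_deriv le_rfl
  change Continuous fun t ↦ ⟪deriv γ t ×₃ deriv (deriv γ) t, _⟫ / _
  exact ((cross3.continuous₂.comp₂ h₁ h₂).inner h₃).div (h₂.norm.pow 2)
    fun t ↦ pow_ne_zero 2 (hκ t)

theorem Function.Periodic.geodesicCurvature {c : ℝ} (h : Function.Periodic γ c) :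
    Function.Periodic (_root_.geodesicCurvature γ) c := fun t ↦ by
  simp only [_root_.geodesicCurvature, h t, h.deriv t, h.deriv.deriv t]

end SphericalCurve

theorem total_torsion_of_closed_spherical_curve_general
    (γ : ℝ → EuclideanSpace ℝ (Fin 3)) (ℓ : ℝ)
    (hsmooth : ContDiff ℝ (⊤ : ℕ∞) γ)
    (hunit : ∀ t, ‖deriv γ t‖ = 1)
    (hclosed : ∀ t, γ (t + ℓ) = γ t)
    (hsphere : ∀ t, ‖γ t‖ = 1) :
    (∀ t, ‖deriv (deriv γ) t‖ ≠ 0) ∧ ∫ t in (0:ℝ)..ℓ, torsion3 γ t = 0 := by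
  have hγ : ContDiff ℝ 3 γ := hsmooth.of_le (WithTop.coe_le_coe.mpr le_top)
  have hκ (t : ℝ) : ‖deriv (deriv γ) t‖ ≠ 0 := by
    have h := norm_deriv_deriv_sq_eq_one_add_geodesicCurvature_sq hγ hunit hsphere t
    exact (pow_ne_zero_iff two_ne_zero).mp (h ▸ by positivity)
  refine ⟨hκ, ?_⟩
  have hperiodic : geodesicCurvature γ ℓ = geodesicCurvature γ 0 := by
    simpa using Function.Periodic.geodesicCurvature hclosed 0
  rw [intervalIntegral.integral_eq_sub_of_hasDerivAt
    (fun t _ ↦ hasDerivAt_arctan_geodesicCurvature hγ hunit hsphere t)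
    ((continuous_torsion3 hγ hκ).intervalIntegrable 0 ℓ), hperiodic, sub_self]

/-- **Total torsion theorem.** A smooth closed unit-speed curve on the unit sphere has
nowhere-vanishing curvature and vanishing total torsion. -/
theorem total_torsion_of_closed_spherical_curve
    (γ : ℝ → EuclideanSpace ℝ (Fin 3)) (ℓ : ℝ) (hℓ : 0 < ℓ)
    (hsmooth : ContDiff ℝ (⊤ : ℕ∞) γ)
    (hunit : ∀ t, ‖deriv γ t‖ = 1)
    (hclosed : ∀ t, γ (t + ℓ) = γ t)
    (hsphere : ∀ t, ‖γ t‖ = 1) :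
    (∀ t, ‖deriv (deriv γ) t‖ ≠ 0) ∧ ∫ t in (0:ℝ)..ℓ, torsion3 γ t = 0 :=
  total_torsion_of_closed_spherical_curve_general γ ℓ hsmooth hunit hclosed hsphere
end

section
/- Let m ≥ 3, let γ : ℝ → EuclideanSpace ℝ (Fin m) be a smooth unit-speed curve, let N be a unit normal field along γ, and let H₁, …, H_{m-2} : ℝ → EuclideanSpace ℝ (Fin m) be smooth maps such that (γ'(t), H₁(t), …, H_{m-2}(t), N(t)) is an orthonormal basis of EuclideanSpace ℝ (Fin m) for every t. Set τ_g^j(t) = -⟨N'(t), H_j(t)⟩ and μ_j(t) = ⟨H_j'(t), H₁(t)⟩. Let θ : ℝ → ℝ be smooth, N(θ)(t) = -sin(θ(t)) H₁(t) + cos(θ(t)) N(t), and H₁(θ)(t) = cos(θ(t)) H₁(t) + sin(θ(t)) N(t). Then for every t the negative of the orthogonal projection of (N(θ))'(t) onto the orthogonal complement of span{γ'(t), N(θ)(t)} equals (θ'(t) + τ_g¹(t)) H₁(θ)(t) + Σ_{j=2}^{m-2} (τ_g^j(t) cos θ(t) − μ_j(t) sin θ(t)) H_j(t). -/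
/-!
Rotating the pair `(H₁, N)` by `θ` gives a new orthonormal frame
`(γ', N(θ), H₁(θ), H₂, …, H_{m-2})`, and the projection away from `span{γ', N(θ)}` keeps exactly
the `H₁(θ)`- and `H_j`-components (`j ≥ 2`) of `N(θ)'`. Differentiating the orthonormality
relations gives these components: `⟪N(θ)', H₁(θ)⟫ = ⟪N', H₁⟫ - θ'` and
`⟪N(θ)', H_j⟫ = sin θ ⟪H_j', H₁⟫ + cos θ ⟪N', H_j⟫`.
-/

open scoped RealInnerProductSpace

/-- Orthogonal projection onto the orthogonal complement of
`span{γ'(t), Z(t)}` in `EuclideanSpace ℝ (Fin m)`. -/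
noncomputable def projH {m : ℕ} (γ Z : ℝ → EuclideanSpace ℝ (Fin m)) (t : ℝ)
    (x : EuclideanSpace ℝ (Fin m)) : EuclideanSpace ℝ (Fin m) :=
  (Submodule.orthogonalProjectionOnto ((Submodule.span ℝ {deriv γ t, Z t})ᗮ) x :
    EuclideanSpace ℝ (Fin m))

open Real Finset

section
variable {E ι : Type*} [NormedAddCommGroup E] [InnerProductSpace ℝ E]

theorem orthonormal_sumElim_pair [DecidableEq ι] {e n : E} {h : ι → E}
    (he : ‖e‖ = 1) (hn : ‖n‖ = 1) (hh : ∀ j, ‖h j‖ = 1) (hne : ⟪n, e⟫ = 0)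
    (hhe : ∀ j, ⟪h j, e⟫ = 0) (hhn : ∀ j, ⟪h j, n⟫ = 0)
    (hhh : ∀ j k, j ≠ k → ⟪h j, h k⟫ = 0) :
    Orthonormal ℝ (Sum.elim ![e, n] h) := by
  rw [orthonormal_iff_ite]
  rintro (i | j) (k | l)
  · fin_cases i <;> fin_cases k <;> simp [he, hn, hne, inner_eq_zero_symm.mp hne]
  · fin_cases i <;> simp [inner_eq_zero_symm.mp (hhe l), inner_eq_zero_symm.mp (hhn l)]
  · fin_cases k <;> simp [hhe, hhn]
  · by_cases hjl : j = l
    · simp [hjl, hh]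
    · simp [hjl, hhh j l hjl]

theorem Orthonormal.sumElim_pair_sum_repr [Fintype ι] {e n : E} {h : ι → E}
    (hon : Orthonormal ℝ (Sum.elim ![e, n] h))
    (hspan : Submodule.span ℝ ({e, n} ∪ Set.range h) = ⊤) (x : E) :
    ⟪e, x⟫ • e + ⟪n, x⟫ • n + ∑ j, ⟪h j, x⟫ • h j = x := by
  have hsp : ⊤ ≤ Submodule.span ℝ (Set.range (Sum.elim ![e, n] h)) := by
    rw [Set.Sum.elim_range, Matrix.range_cons, Matrix.range_cons, Matrix.range_empty,
      Set.union_empty, Set.singleton_union, hspan]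
  simpa [Fintype.sum_sum_type, Fin.sum_univ_two] using
    (OrthonormalBasis.mk hon hsp).sum_repr' x

theorem starProjection_orthogonal_span_pair [CompleteSpace E] {e z : E} (he : ‖e‖ = 1)
    (hz : ‖z‖ = 1) (hze : ⟪z, e⟫ = 0) (x : E) :
    (Submodule.span ℝ {e, z})ᗮ.starProjection x = x - ⟪e, x⟫ • e - ⟪z, x⟫ • z := by
  refine Submodule.eq_starProjection_of_mem_orthogonal'
    (z := ⟪e, x⟫ • e + ⟪z, x⟫ • z) ?_ ?_ (by abel)
  · rw [Submodule.span_insert, ← Submodule.inf_orthogonal, Submodule.mem_inf,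
      Submodule.mem_orthogonal_singleton_iff_inner_right,
      Submodule.mem_orthogonal_singleton_iff_inner_right]
    simp only [inner_sub_right, real_inner_smul_right, real_inner_self_eq_norm_sq, he, hz, hze,
      inner_eq_zero_symm.mp hze]
    constructor <;> ring
  · refine Submodule.le_orthogonal_orthogonal _ (Submodule.add_mem _ ?_ ?_) <;>
      exact Submodule.smul_mem _ _ (Submodule.subset_span (by simp))

theorem norm_neg_sin_smul_add_cos_smul {u v : E} (hu : ‖u‖ = 1) (hv : ‖v‖ = 1)
    (huv : ⟪u, v⟫ = 0) (α : ℝ) : ‖-sin α • u + cos α • v‖ = 1 := by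
  rw [← pow_eq_one_iff_of_nonneg (norm_nonneg _) two_ne_zero, ← real_inner_self_eq_norm_sq]
  simp only [inner_add_left, inner_add_right, real_inner_smul_left, real_inner_smul_right,
    real_inner_self_eq_norm_sq u, real_inner_self_eq_norm_sq v, hu, hv, huv,
    inner_eq_zero_symm.mp huv]
  linear_combination sin_sq_add_cos_sq α

theorem inner_smul_add_inner_smul_rotate (u v x : E) (α : ℝ) :
    ⟪-sin α • u + cos α • v, x⟫ • (-sin α • u + cos α • v) +
      ⟪cos α • u + sin α • v, x⟫ • (cos α • u + sin α • v) = ⟪u, x⟫ • u + ⟪v, x⟫ • v := by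
  simp only [inner_add_left, real_inner_smul_left]
  linear_combination (norm := module) (sin_sq_add_cos_sq α) • (⟪u, x⟫ • u + ⟪v, x⟫ • v)

theorem sub_inner_smul_sub_inner_smul_rotate [Fintype ι] [DecidableEq ι] {e n : E}
    {h : ι → E} (hon : Orthonormal ℝ (Sum.elim ![e, n] h))
    (hspan : Submodule.span ℝ ({e, n} ∪ Set.range h) = ⊤) (i₀ : ι) (α : ℝ) (x : E) :
    x - ⟪e, x⟫ • e - ⟪-sin α • h i₀ + cos α • n, x⟫ • (-sin α • h i₀ + cos α • n) =
      ⟪cos α • h i₀ + sin α • n, x⟫ • (cos α • h i₀ + sin α • n) +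
        ∑ j ∈ univ.erase i₀, ⟪h j, x⟫ • h j := by
  have hx := Orthonormal.sumElim_pair_sum_repr hon hspan x
  rw [← add_sum_erase _ _ (mem_univ i₀)] at hx
  linear_combination (norm := module) -hx - inner_smul_add_inner_smul_rotate (h i₀) n x α

theorem inner_deriv_eq_neg_deriv_inner {f g : ℝ → E} {c t : ℝ}
    (hf : DifferentiableAt ℝ f t) (hg : DifferentiableAt ℝ g t) (hfg : ∀ s, ⟪f s, g s⟫ = c) :
    ⟪f t, deriv g t⟫ = -⟪deriv f t, g t⟫ := by
  have hconst : HasDerivAt (fun s => ⟪f s, g s⟫) 0 t := by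
    simpa only [hfg] using hasDerivAt_const t c
  linarith [(hf.hasDerivAt.inner ℝ hg.hasDerivAt).unique hconst]

theorem inner_deriv_self_eq_zero {f : ℝ → E} {c t : ℝ} (hf : DifferentiableAt ℝ f t)
    (hfc : ∀ s, ‖f s‖ = c) : ⟪f t, deriv f t⟫ = 0 := by
  have := inner_deriv_eq_neg_deriv_inner hf hf (c := c ^ 2) fun s => by
    rw [real_inner_self_eq_norm_sq, hfc]
  rw [real_inner_comm (f t)] at this
  linarith

section RotatedFrame

variable {u v : ℝ → E} {θ : ℝ → ℝ} {t : ℝ}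

theorem deriv_neg_sin_smul_add_cos_smul (hθ : DifferentiableAt ℝ θ t)
    (hu : DifferentiableAt ℝ u t) (hv : DifferentiableAt ℝ v t) :
    deriv (fun s => -sin (θ s) • u s + cos (θ s) • v s) t =
      -deriv θ t • (cos (θ t) • u t + sin (θ t) • v t) +
        (-sin (θ t) • deriv u t + cos (θ t) • deriv v t) :=
  ((hθ.hasDerivAt.sin.neg.smul hu.hasDerivAt).add (hθ.hasDerivAt.cos.smul hv.hasDerivAt)
    |>.congr_deriv (by simp only [Pi.neg_apply]; module)).deriv

theorem inner_deriv_neg_sin_smul_add_cos_smul_cos_smul_add_sin_smul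
    (hθ : DifferentiableAt ℝ θ t) (hu : DifferentiableAt ℝ u t) (hv : DifferentiableAt ℝ v t)
    (hu1 : ∀ s, ‖u s‖ = 1) (hv1 : ∀ s, ‖v s‖ = 1) (huv : ∀ s, ⟪u s, v s⟫ = 0) :
    ⟪deriv (fun s => -sin (θ s) • u s + cos (θ s) • v s) t,
        cos (θ t) • u t + sin (θ t) • v t⟫ = ⟪deriv v t, u t⟫ - deriv θ t := by
  have huu' := inner_deriv_self_eq_zero hu hu1
  have hvv' := inner_deriv_self_eq_zero hv hv1
  have hvu' := inner_deriv_eq_neg_deriv_inner hv hu fun s => by rw [real_inner_comm, huv s]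
  rw [deriv_neg_sin_smul_add_cos_smul hθ hu hv]
  simp only [inner_add_left, inner_add_right, real_inner_smul_left, real_inner_smul_right,
    real_inner_self_eq_norm_sq, hu1, hv1, huv, inner_eq_zero_symm.mp (huv t),
    real_inner_comm (u t) (deriv u t), real_inner_comm (v t) (deriv v t),
    real_inner_comm (v t) (deriv u t), huu', hvv', hvu']
  linear_combination (⟪deriv v t, u t⟫ - deriv θ t) * sin_sq_add_cos_sq (θ t)

theorem inner_deriv_neg_sin_smul_add_cos_smul_of_orthogonal {w : ℝ → E}
    (hθ : DifferentiableAt ℝ θ t) (hu : DifferentiableAt ℝ u t) (hv : DifferentiableAt ℝ v t)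
    (hw : DifferentiableAt ℝ w t) (hwu : ∀ s, ⟪w s, u s⟫ = 0) (hwv : ⟪w t, v t⟫ = 0) :
    ⟪deriv (fun s => -sin (θ s) • u s + cos (θ s) • v s) t, w t⟫ =
      sin (θ t) * ⟪deriv w t, u t⟫ + cos (θ t) * ⟪deriv v t, w t⟫ := by
  have hwu' := inner_deriv_eq_neg_deriv_inner hw hu hwu
  rw [deriv_neg_sin_smul_add_cos_smul hθ hu hv, real_inner_comm]
  simp only [inner_add_right, real_inner_smul_right, hwu t, hwv, hwu',
    real_inner_comm (deriv v t) (w t)]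
  ring

end RotatedFrame

end

/-- Rotating the normal: the geodesic torsion vector of `γ` with respect to the rotated
normal `N(θ) = -sin θ · H₁ + cos θ · N` equals
`(θ' + τ_g¹) H₁(θ) + Σ_{j≥2} (τ_g^j cos θ − μ_j sin θ) H_j`. -/
theorem geodesicTorsionVector_of_rotated_normal
    (m : ℕ) (hm : 3 ≤ m)
    (γ : ℝ → EuclideanSpace ℝ (Fin m))
    (hunit : ∀ t, ‖deriv γ t‖ = 1)
    (N : ℝ → EuclideanSpace ℝ (Fin m))
    (hNsmooth : ContDiff ℝ (⊤ : ℕ∞) N)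
    (hNunit : ∀ t, ‖N t‖ = 1)
    (hNorth : ∀ t, ⟪N t, deriv γ t⟫ = 0)
    (H : Fin (m - 2) → ℝ → EuclideanSpace ℝ (Fin m))
    (hHsmooth : ∀ j, ContDiff ℝ (⊤ : ℕ∞) (H j))
    (hHunit : ∀ j t, ‖H j t‖ = 1)
    (hHγ : ∀ j t, ⟪H j t, deriv γ t⟫ = 0)
    (hHN : ∀ j t, ⟪H j t, N t⟫ = 0)
    (hHH : ∀ j k, j ≠ k → ∀ t, ⟪H j t, H k t⟫ = 0)
    (hspan : ∀ t,
      Submodule.span ℝ ({deriv γ t, N t} ∪ Set.range fun j => H j t) = ⊤)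
    (θ : ℝ → ℝ) (hθ : ContDiff ℝ (⊤ : ℕ∞) θ) :
    ∀ t,
      -projH γ (fun s => -Real.sin (θ s) • H ⟨0, by omega⟩ s + Real.cos (θ s) • N s) t
          (deriv (fun s => -Real.sin (θ s) • H ⟨0, by omega⟩ s + Real.cos (θ s) • N s) t) =
        (deriv θ t + -⟪deriv N t, H ⟨0, by omega⟩ t⟫) •
            (Real.cos (θ t) • H ⟨0, by omega⟩ t + Real.sin (θ t) • N t) +
          ∑ j ∈ Finset.univ.erase (⟨0, by omega⟩ : Fin (m - 2)),
            (-⟪deriv N t, H j t⟫ * Real.cos (θ t) -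
              ⟪deriv (H j) t, H ⟨0, by omega⟩ t⟫ * Real.sin (θ t)) • H j t := by
  intro t
  set j₀ : Fin (m - 2) := ⟨0, by omega⟩
  have hθd : DifferentiableAt ℝ θ t := hθ.differentiable (by simp) t
  have hNd : DifferentiableAt ℝ N t := hNsmooth.differentiable (by simp) t
  have hHd : ∀ j, DifferentiableAt ℝ (H j) t := fun j => (hHsmooth j).differentiable (by simp) t
  have hframe := orthonormal_sumElim_pair (hunit t) (hNunit t) (fun j => hHunit j t)
    (hNorth t) (fun j => hHγ j t) (fun j => hHN j t) fun j k hjk => hHH j k hjk t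
  have hZγ : ⟪-sin (θ t) • H j₀ t + cos (θ t) • N t, deriv γ t⟫ = 0 := by
    simp only [inner_add_left, real_inner_smul_left, hHγ, hNorth, mul_zero, add_zero]
  simp only [projH, ← Submodule.starProjection_apply]
  rw [starProjection_orthogonal_span_pair (hunit t)
      (norm_neg_sin_smul_add_cos_smul (hHunit j₀ t) (hNunit t) (hHN j₀ t) (θ t)) hZγ,
    sub_inner_smul_sub_inner_smul_rotate hframe (hspan t) j₀ (θ t), neg_add, ← neg_smul,
    ← sum_neg_distrib]
  congr 1
  · congr 1
    rw [real_inner_comm, inner_deriv_neg_sin_smul_add_cos_smul_cos_smul_add_sin_smul hθd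
      (hHd j₀) hNd (hHunit j₀) hNunit (hHN j₀)]
    ring
  · refine sum_congr rfl fun j hj => ?_
    rw [← neg_smul]
    congr 1
    rw [real_inner_comm, inner_deriv_neg_sin_smul_add_cos_smul_of_orthogonal hθd (hHd j₀) hNd
      (hHd j) (hHH j j₀ (ne_of_mem_erase hj)) (hHN j t)]
    ring
end

section
/- Let m ≥ 3, let γ : ℝ → EuclideanSpace ℝ (Fin m) be a smooth unit-speed curve, and let N be a unit normal field along γ such that N'(t) is a scalar multiple of γ'(t) for every t (γ is a line of curvature with respect to N). Let H be a smooth map with ‖H(t)‖ = 1 and H(t) ∈ ℋ(N)_t for all t, which is parallel in ℋ(N) (π_{ℋ(N)_t}(H'(t)) = 0 for all t), and let θ : ℝ → ℝ be smooth. Set N(θ)(t) = -sin(θ(t)) H(t) + cos(θ(t)) N(t) and H₁(θ)(t) = cos(θ(t)) H(t) + sin(θ(t)) N(t). Then for every t the geodesic torsion vector of γ with respect to N(θ) satisfies -π_{ℋ(N(θ))_t}((N(θ))'(t)) = θ'(t) · H₁(θ)(t). -/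
/-!
Differentiating `⟪N, H⟫ = 0` and using that `N'` is tangent shows `H' ⊥ N`; since `H` is
parallel, `H'` lies in `span {γ', N}` and is therefore tangent. Hence
`N(θ)' = -θ' H₁(θ) + (tangent vector)`, and `H₁(θ)` already lies in `ℋ(N(θ))` because
`(H, N)` is orthonormal and normal to `γ'`, so the projection keeps exactly `-θ' H₁(θ)`.
-/

open scoped RealInnerProductSpace

namespace Submodule

open scoped InnerProductSpace

variable {𝕜 E : Type*} [RCLike 𝕜] [NormedAddCommGroup E] [InnerProductSpace 𝕜 E]

theorem mem_orthogonal_span_pair_iff {u v x : E} :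
    x ∈ (span 𝕜 {u, v})ᗮ ↔ ⟪u, x⟫_𝕜 = 0 ∧ ⟪v, x⟫_𝕜 = 0 := by
  refine ⟨fun h => ⟨h u (subset_span (by simp)), h v (subset_span (by simp))⟩, ?_⟩
  rintro ⟨hu, hv⟩ w hw
  obtain ⟨a, b, rfl⟩ := mem_span_pair.mp hw
  simp [inner_add_left, inner_smul_left, hu, hv]

theorem eq_smul_of_mem_span_pair_of_inner_eq_zero {u v x : E} (hx : x ∈ span 𝕜 {u, v})
    (hvu : ⟪v, u⟫_𝕜 = 0) (hv : v ≠ 0) (hvx : ⟪v, x⟫_𝕜 = 0) : ∃ a : 𝕜, x = a • u := by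
  obtain ⟨a, b, rfl⟩ := mem_span_pair.mp hx
  have hb : b = 0 := by
    simpa [inner_add_right, inner_smul_right, hvu, hv] using hvx
  exact ⟨a, by simp [hb]⟩

theorem mem_of_starProjection_orthogonal_eq_zero {K : Submodule 𝕜 E} [K.HasOrthogonalProjection]
    {x : E} (h : Kᗮ.starProjection x = 0) : x ∈ K := by
  rwa [starProjection_apply_eq_zero_iff, orthogonal_orthogonal] at h

theorem starProjection_orthogonal_add_of_mem {K : Submodule 𝕜 E} [Kᗮ.HasOrthogonalProjection]
    {x y : E} (hx : x ∈ Kᗮ) (hy : y ∈ K) : Kᗮ.starProjection (x + y) = x :=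
  eq_starProjection_of_mem_orthogonal' hx (K.le_orthogonal_orthogonal hy) rfl

end Submodule

theorem projH_eq_starProjection {m : ℕ} (γ Z : ℝ → EuclideanSpace ℝ (Fin m)) (t : ℝ)
    (x : EuclideanSpace ℝ (Fin m)) :
    projH γ Z t x = (Submodule.span ℝ {deriv γ t, Z t})ᗮ.starProjection x :=
  rfl

section Curves

variable {E : Type*} [NormedAddCommGroup E] [InnerProductSpace ℝ E]

open Filter Topology

theorem inner_deriv_eq_neg_of_inner_eq_zero {f g : ℝ → E} {t : ℝ} (hf : DifferentiableAt ℝ f t)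
    (hg : DifferentiableAt ℝ g t) (hfg : ∀ᶠ s in 𝓝 t, ⟪f s, g s⟫ = 0) :
    ⟪f t, deriv g t⟫ = -⟪deriv f t, g t⟫ := by
  have h := (hf.hasDerivAt.inner ℝ hg.hasDerivAt).unique
    ((hasDerivAt_const t (0 : ℝ)).congr_of_eventuallyEq hfg)
  linarith

theorem exists_deriv_eq_smul_of_deriv_mem_span {N H : ℝ → E} {T : E} {t : ℝ}
    (hN : DifferentiableAt ℝ N t) (hH : DifferentiableAt ℝ H t) (hNH : ∀ s, ⟪N s, H s⟫ = 0)
    (hNT : ⟪N t, T⟫ = 0) (hN₀ : N t ≠ 0) (hN' : ∃ c : ℝ, deriv N t = c • T)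
    (hTH : ⟪T, H t⟫ = 0) (hH' : deriv H t ∈ Submodule.span ℝ {T, N t}) :
    ∃ a : ℝ, deriv H t = a • T := by
  obtain ⟨c, hc⟩ := hN'
  refine Submodule.eq_smul_of_mem_span_pair_of_inner_eq_zero hH' hNT hN₀ ?_
  rw [inner_deriv_eq_neg_of_inner_eq_zero hN hH (Eventually.of_forall hNH), hc,
    real_inner_smul_left, hTH, mul_zero, neg_zero]

theorem HasDerivAt.rotate {θ : ℝ → ℝ} {H N : ℝ → E} {θ' : ℝ} {H' N' : E} {t : ℝ}
    (hθ : HasDerivAt θ θ' t) (hH : HasDerivAt H H' t) (hN : HasDerivAt N N' t) :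
    HasDerivAt (fun s => -Real.sin (θ s) • H s + Real.cos (θ s) • N s)
      (-θ' • (Real.cos (θ t) • H t + Real.sin (θ t) • N t) +
        (-Real.sin (θ t) • H' + Real.cos (θ t) • N')) t := by
  convert (hθ.sin.fun_neg.fun_smul hH).fun_add (hθ.cos.fun_smul hN) using 1
  module

theorem inner_rotate_eq_zero {h n : E} (hhn : ⟪h, n⟫ = 0) (hnorm : ‖h‖ = ‖n‖) (α : ℝ) :
    ⟪-Real.sin α • h + Real.cos α • n, Real.cos α • h + Real.sin α • n⟫ = 0 := by
  simp only [inner_add_left, inner_add_right, real_inner_smul_left, real_inner_smul_right,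
    real_inner_comm h n, hhn, real_inner_self_eq_norm_sq, hnorm]
  ring

end Curves

theorem geodesicTorsionVector_of_parallel_rotation_general
    (m : ℕ)
    (γ : ℝ → EuclideanSpace ℝ (Fin m))
    (N : ℝ → EuclideanSpace ℝ (Fin m))
    (hNsmooth : ContDiff ℝ (⊤ : ℕ∞) N)
    (hNunit : ∀ t, ‖N t‖ = 1)
    (hNorth : ∀ t, ⟪N t, deriv γ t⟫ = 0)
    (hRodrigues : ∀ t, ∃ c : ℝ, deriv N t = c • deriv γ t)
    (H : ℝ → EuclideanSpace ℝ (Fin m))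
    (hHsmooth : ContDiff ℝ (⊤ : ℕ∞) H)
    (hHunit : ∀ t, ‖H t‖ = 1)
    (hHmem : ∀ t, H t ∈ (Submodule.span ℝ {deriv γ t, N t})ᗮ)
    (hHparallel : ∀ t, projH γ N t (deriv H t) = 0)
    (θ : ℝ → ℝ) (hθ : ContDiff ℝ (⊤ : ℕ∞) θ) :
    ∀ t,
      -projH γ (fun s => -Real.sin (θ s) • H s + Real.cos (θ s) • N s) t
          (deriv (fun s => -Real.sin (θ s) • H s + Real.cos (θ s) • N s) t) =
        deriv θ t • (Real.cos (θ t) • H t + Real.sin (θ t) • N t) := by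
  intro t
  have hNd := hNsmooth.differentiable (by simp)
  have hHd := hHsmooth.differentiable (by simp)
  have hθd := hθ.differentiable (by simp)
  have hHperp := fun s => Submodule.mem_orthogonal_span_pair_iff.mp (hHmem s)
  have hTN : ⟪deriv γ t, N t⟫ = 0 := (real_inner_comm _ _).trans (hNorth t)
  obtain ⟨a, ha⟩ := exists_deriv_eq_smul_of_deriv_mem_span (hNd t) (hHd t)
    (fun s => (hHperp s).2) (hNorth t) (fun h => by simpa [h] using hNunit t) (hRodrigues t)
    (hHperp t).1 (Submodule.mem_of_starProjection_orthogonal_eq_zero (hHparallel t))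
  obtain ⟨c, hc⟩ := hRodrigues t
  have hH₁ : Real.cos (θ t) • H t + Real.sin (θ t) • N t ∈
      (Submodule.span ℝ {deriv γ t, -Real.sin (θ t) • H t + Real.cos (θ t) • N t})ᗮ := by
    refine Submodule.mem_orthogonal_span_pair_iff.mpr ⟨?_, ?_⟩
    · simp [inner_add_right, real_inner_smul_right, (hHperp t).1, hTN]
    · exact inner_rotate_eq_zero ((real_inner_comm _ _).trans (hHperp t).2)
        (by rw [hHunit, hNunit]) _
  have hderiv : deriv (fun s => -Real.sin (θ s) • H s + Real.cos (θ s) • N s) t =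
      -deriv θ t • (Real.cos (θ t) • H t + Real.sin (θ t) • N t) +
        (-Real.sin (θ t) * a + Real.cos (θ t) * c) • deriv γ t := by
    rw [((hθd t).hasDerivAt.rotate (hHd t).hasDerivAt (hNd t).hasDerivAt).deriv, ha, hc]
    module
  rw [projH_eq_starProjection, hderiv, Submodule.starProjection_orthogonal_add_of_mem
    (Submodule.smul_mem _ _ hH₁) (Submodule.smul_mem _ _ (Submodule.subset_span (by simp))),
    neg_smul, neg_neg]

/-- If `γ` is a line of curvature with respect to `N` and `N(θ)` is a parallel rotation
of `N`, then the geodesic torsion vector of `γ` with respect to `N(θ)` is `θ' H₁(θ)`. -/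
theorem geodesicTorsionVector_of_parallel_rotation
    (m : ℕ) (hm : 3 ≤ m)
    (γ : ℝ → EuclideanSpace ℝ (Fin m))
    (hsmooth : ContDiff ℝ (⊤ : ℕ∞) γ)
    (hunit : ∀ t, ‖deriv γ t‖ = 1)
    (N : ℝ → EuclideanSpace ℝ (Fin m))
    (hNsmooth : ContDiff ℝ (⊤ : ℕ∞) N)
    (hNunit : ∀ t, ‖N t‖ = 1)
    (hNorth : ∀ t, ⟪N t, deriv γ t⟫ = 0)
    (hRodrigues : ∀ t, ∃ c : ℝ, deriv N t = c • deriv γ t)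
    (H : ℝ → EuclideanSpace ℝ (Fin m))
    (hHsmooth : ContDiff ℝ (⊤ : ℕ∞) H)
    (hHunit : ∀ t, ‖H t‖ = 1)
    (hHmem : ∀ t, H t ∈ (Submodule.span ℝ {deriv γ t, N t})ᗮ)
    (hHparallel : ∀ t, projH γ N t (deriv H t) = 0)
    (θ : ℝ → ℝ) (hθ : ContDiff ℝ (⊤ : ℕ∞) θ) :
    ∀ t,
      -projH γ (fun s => -Real.sin (θ s) • H s + Real.cos (θ s) • N s) t
          (deriv (fun s => -Real.sin (θ s) • H s + Real.cos (θ s) • N s) t) =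
        deriv θ t • (Real.cos (θ t) • H t + Real.sin (θ t) • N t) :=
  geodesicTorsionVector_of_parallel_rotation_general m γ N hNsmooth hNunit hNorth hRodrigues H
    hHsmooth hHunit hHmem hHparallel θ hθ
end

section
/- Let m ≥ 3, let γ : ℝ → EuclideanSpace ℝ (Fin m) be a smooth unit-speed curve, closed with period ℓ > 0, and let N be a unit normal field along γ such that N'(t) is a scalar multiple of γ'(t) for every t (γ is a line of curvature with respect to N). Let H be a smooth map with ‖H(t)‖ = 1 and H(t) ∈ ℋ(N)_t for all t, parallel in ℋ(N), and let θ : ℝ → ℝ be smooth with θ(ℓ) − θ(0) = 2πn for some integer n (a closed parallel rotation). Set N(θ)(t) = -sin(θ(t)) H(t) + cos(θ(t)) N(t) and H₁(θ)(t) = cos(θ(t)) H(t) + sin(θ(t)) N(t). Then the total geodesic torsion of γ with respect to N(θ) satisfies ∫₀^ℓ ⟨-(N(θ))'(t), H₁(θ)(t)⟩ dt = 2πn; in particular it is an integer multiple of 2π. -/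
/-!
Rotating the orthonormal pair `(H, N)` by the angle `θ` adds `θ'` to the geodesic torsion:
`⟪-N(θ)', H₁(θ)⟫ = θ' + ⟪-N', H⟫`. For a line of curvature `N'` is parallel to `γ'`, which is
orthogonal to `H`, so the integrand is `θ'` and the total torsion is `θ(ℓ) - θ(0) = 2πn`.
-/

open scoped RealInnerProductSpace

section InnerProductCurves

variable {E : Type*} [NormedAddCommGroup E] [InnerProductSpace ℝ E]

theorem inner_deriv_left_eq_neg_of_inner_const {f g : ℝ → E} {t c : ℝ}
    (hf : DifferentiableAt ℝ f t) (hg : DifferentiableAt ℝ g t) (h : ∀ s, ⟪f s, g s⟫ = c) :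
    ⟪deriv f t, g t⟫ = -⟪f t, deriv g t⟫ := by
  have hderiv := deriv_inner_apply ℝ hf hg
  rw [show (fun s => ⟪f s, g s⟫) = fun _ => c from funext h, deriv_const] at hderiv
  linarith

theorem inner_deriv_self_eq_zero_of_norm_const {f : ℝ → E} {t r : ℝ}
    (hf : DifferentiableAt ℝ f t) (h : ∀ s, ‖f s‖ = r) : ⟪deriv f t, f t⟫ = 0 := by
  have hself := inner_deriv_left_eq_neg_of_inner_const hf hf (c := r ^ 2)
    fun s => by rw [real_inner_self_eq_norm_sq, h]
  rw [real_inner_comm (deriv f t)] at hself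
  linarith

theorem inner_neg_deriv_rotation {θ : ℝ → ℝ} {H N : ℝ → E} {t : ℝ}
    (hθ : DifferentiableAt ℝ θ t) (hH : DifferentiableAt ℝ H t) (hN : DifferentiableAt ℝ N t)
    (hHunit : ∀ s, ‖H s‖ = 1) (hNunit : ∀ s, ‖N s‖ = 1) (hHN : ∀ s, ⟪H s, N s⟫ = 0) :
    ⟪-deriv (fun s => -Real.sin (θ s) • H s + Real.cos (θ s) • N s) t,
        Real.cos (θ t) • H t + Real.sin (θ t) • N t⟫ = deriv θ t + ⟪-deriv N t, H t⟫ := by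
  have hderiv : HasDerivAt (fun s => -Real.sin (θ s) • H s + Real.cos (θ s) • N s)
      ((-Real.sin (θ t) • deriv H t + (-(Real.cos (θ t) * deriv θ t)) • H t)
        + (Real.cos (θ t) • deriv N t + (-Real.sin (θ t) * deriv θ t) • N t)) t :=
    (hθ.hasDerivAt.sin.neg.smul hH.hasDerivAt).add (hθ.hasDerivAt.cos.smul hN.hasDerivAt)
  have hH'H := inner_deriv_self_eq_zero_of_norm_const hH hHunit
  have hN'N := inner_deriv_self_eq_zero_of_norm_const hN hNunit
  have hH'N := inner_deriv_left_eq_neg_of_inner_const hH hN hHN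
  rw [hderiv.deriv]
  simp only [inner_neg_left, inner_add_left, inner_add_right, real_inner_smul_left,
    real_inner_smul_right, real_inner_self_eq_norm_sq, hHunit, hNunit, hHN, hH'H, hN'N, hH'N,
    real_inner_comm (H t) (N t), real_inner_comm (H t) (deriv N t)]
  linear_combination (deriv θ t - ⟪H t, deriv N t⟫) * Real.sin_sq_add_cos_sq (θ t)

end InnerProductCurves

theorem total_geodesicTorsion_of_closed_parallel_rotation_general
    (m : ℕ)
    (γ : ℝ → EuclideanSpace ℝ (Fin m)) (ℓ : ℝ)
    (N : ℝ → EuclideanSpace ℝ (Fin m))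
    (hNsmooth : ContDiff ℝ (⊤ : ℕ∞) N)
    (hNunit : ∀ t, ‖N t‖ = 1)
    (hRodrigues : ∀ t, ∃ c : ℝ, deriv N t = c • deriv γ t)
    (H : ℝ → EuclideanSpace ℝ (Fin m))
    (hHsmooth : ContDiff ℝ (⊤ : ℕ∞) H)
    (hHunit : ∀ t, ‖H t‖ = 1)
    (hHmem : ∀ t, H t ∈ (Submodule.span ℝ {deriv γ t, N t})ᗮ)
    (θ : ℝ → ℝ) (hθ : ContDiff ℝ (⊤ : ℕ∞) θ)
    (n : ℤ) (hθclosed : θ ℓ - θ 0 = 2 * Real.pi * n) :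
    ∫ t in (0:ℝ)..ℓ,
        ⟪-deriv (fun s => -Real.sin (θ s) • H s + Real.cos (θ s) • N s) t,
          Real.cos (θ t) • H t + Real.sin (θ t) • N t⟫ = 2 * Real.pi * n := by
  have hθd : Differentiable ℝ θ := hθ.differentiable (by simp)
  have hHN : ∀ t, ⟪H t, N t⟫ = 0 := fun t =>
    Submodule.inner_left_of_mem_orthogonal (Submodule.subset_span (by simp)) (hHmem t)
  have hN'H : ∀ t, ⟪deriv N t, H t⟫ = 0 := fun t => by
    obtain ⟨c, hc⟩ := hRodrigues t
    rw [hc, real_inner_smul_left,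
      Submodule.inner_right_of_mem_orthogonal (Submodule.subset_span (by simp)) (hHmem t),
      mul_zero]
  calc _ = ∫ t in (0:ℝ)..ℓ, deriv θ t := by
        refine intervalIntegral.integral_congr fun t _ => ?_
        rw [inner_neg_deriv_rotation (hθd t) (hHsmooth.differentiable (by simp) t)
          (hNsmooth.differentiable (by simp) t) hHunit hNunit hHN, inner_neg_left, hN'H,
          neg_zero, add_zero]
    _ = θ ℓ - θ 0 := intervalIntegral.integral_deriv_eq_sub (fun t _ => hθd t)
        ((hθ.continuous_deriv (by simp)).intervalIntegrable 0 ℓ)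
    _ = 2 * Real.pi * n := hθclosed

/-- If `γ` is a closed line of curvature with respect to `N`, then the total geodesic
torsion of `γ` with respect to any closed parallel rotation `N(θ)` of `N` equals `2πn`. -/
theorem total_geodesicTorsion_of_closed_parallel_rotation
    (m : ℕ) (hm : 3 ≤ m)
    (γ : ℝ → EuclideanSpace ℝ (Fin m)) (ℓ : ℝ) (hℓ : 0 < ℓ)
    (hsmooth : ContDiff ℝ (⊤ : ℕ∞) γ)
    (hunit : ∀ t, ‖deriv γ t‖ = 1)
    (hclosed : ∀ t, γ (t + ℓ) = γ t)
    (N : ℝ → EuclideanSpace ℝ (Fin m))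
    (hNsmooth : ContDiff ℝ (⊤ : ℕ∞) N)
    (hNunit : ∀ t, ‖N t‖ = 1)
    (hNorth : ∀ t, ⟪N t, deriv γ t⟫ = 0)
    (hRodrigues : ∀ t, ∃ c : ℝ, deriv N t = c • deriv γ t)
    (H : ℝ → EuclideanSpace ℝ (Fin m))
    (hHsmooth : ContDiff ℝ (⊤ : ℕ∞) H)
    (hHunit : ∀ t, ‖H t‖ = 1)
    (hHmem : ∀ t, H t ∈ (Submodule.span ℝ {deriv γ t, N t})ᗮ)
    (hHparallel : ∀ t, projH γ N t (deriv H t) = 0)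
    (θ : ℝ → ℝ) (hθ : ContDiff ℝ (⊤ : ℕ∞) θ)
    (n : ℤ) (hθclosed : θ ℓ - θ 0 = 2 * Real.pi * n) :
    ∫ t in (0:ℝ)..ℓ,
        ⟪-deriv (fun s => -Real.sin (θ s) • H s + Real.cos (θ s) • N s) t,
          Real.cos (θ t) • H t + Real.sin (θ t) • N t⟫ = 2 * Real.pi * n :=
  total_geodesicTorsion_of_closed_parallel_rotation_general m γ ℓ N hNsmooth hNunit hRodrigues H
    hHsmooth hHunit hHmem θ hθ n hθclosed
end

section
/- Let m ≥ 3 and let γ : ℝ → EuclideanSpace ℝ (Fin m) be a smooth unit-speed curve, closed with period ℓ > 0, which is three-dimensional with curvature κ(t) = ‖γ''(t)‖ > 0, principal normal P = γ''/κ, torsion τ, and unit field H₁, where P and H₁ satisfy P(t + ℓ) = P(t), H₁(t + ℓ) = H₁(t), and τ(t + ℓ) = τ(t) for all t. Suppose N is a unit normal field along γ with N(t + ℓ) = N(t) for all t, such that γ is a well-positioned line of curvature with respect to N, i.e., N'(t) is a scalar multiple of γ'(t) and N(t) ∈ span{P(t), H₁(t)} for every t. Then the total torsion ∫₀^ℓ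 τ(t) dt is an integer multiple of 2π. -/
open scoped RealInnerProductSpace

/-!
With `a = ⟪P, N⟫` and `b = ⟪H₁, N⟫`, the Rodrigues condition `N' ∥ γ'` and the Frenet equations
give the rotation system `a' = -τ b`, `b' = τ a`. Hence `z = a + b i` solves `z' = i τ z`, so
`z ℓ = z 0 · exp (i ∫₀^ℓ τ)`. Since `N` lies in `span {P, H₁}` and is a unit vector, `z 0 ≠ 0`,
and periodicity `z ℓ = z 0` forces `exp (i ∫₀^ℓ τ) = 1`.
-/

open Complex

section InnerProduct

variable {E : Type*} [NormedAddCommGroup E] [InnerProductSpace ℝ E]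

theorem inner_deriv_eq_zero_of_norm_eq_s12 {f : ℝ → E} {c : ℝ} (hf : ∀ s, ‖f s‖ = c) {t : ℝ}
    (hft : DifferentiableAt ℝ f t) : ⟪f t, deriv f t⟫ = 0 := by
  have h := hft.hasDerivAt.norm_sq
  simp only [hf] at h
  have := h.unique (hasDerivAt_const t (c ^ 2))
  linarith

theorem inner_ne_zero_or_inner_ne_zero_of_mem_span_pair {u v x : E}
    (hx : x ∈ Submodule.span ℝ {u, v}) (hx0 : x ≠ 0) : ⟪u, x⟫ ≠ 0 ∨ ⟪v, x⟫ ≠ 0 := by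
  by_contra! h
  obtain ⟨c, d, rfl⟩ := Submodule.mem_span_pair.mp hx
  apply hx0
  rw [← inner_self_eq_zero (𝕜 := ℝ)]
  nth_rw 1 [inner_add_left]
  rw [real_inner_smul_left, real_inner_smul_left, h.1, h.2]
  ring

theorem hasDerivAt_inner_of_deriv_parallel {U N T : ℝ → E} {U' : E} {t : ℝ}
    (hU : HasDerivAt U U' t) (hN : DifferentiableAt ℝ N t)
    (hNT : ∃ c : ℝ, deriv N t = c • T t) (hUT : ⟪U t, T t⟫ = 0) :
    HasDerivAt (fun s => ⟪U s, N s⟫) ⟪U', N t⟫ t := by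
  obtain ⟨c, hc⟩ := hNT
  simpa [hc, real_inner_smul_right, hUT] using hU.inner ℝ hN.hasDerivAt

end InnerProduct

theorem eq_mul_cexp_integral_of_hasDerivAt {z f : ℝ → ℂ} (hf : Continuous f)
    (hz : ∀ t, HasDerivAt z (f t * z t) t) (t : ℝ) :
    z t = z 0 * cexp (∫ s in (0:ℝ)..t, f s) := by
  set F : ℝ → ℂ := fun t => ∫ s in (0:ℝ)..t, f s
  have hF : ∀ t, HasDerivAt F (f t) t := fun t =>
    intervalIntegral.integral_hasDerivAt_right (hf.intervalIntegrable _ _)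
      hf.aestronglyMeasurable.stronglyMeasurableAtFilter hf.continuousAt
  have hw : ∀ t, HasDerivAt (fun s => z s * cexp (-F s)) 0 t := fun t => by
    refine ((hz t).fun_mul (hF t).fun_neg.cexp).congr_deriv ?_
    ring
  have hconst := is_const_of_deriv_eq_zero (fun t => (hw t).differentiableAt)
    (fun t => (hw t).deriv) t 0
  have hF0 : F 0 = 0 := intervalIntegral.integral_same
  simp only [hF0, neg_zero, exp_zero, mul_one] at hconst
  rw [← hconst, mul_assoc, ← exp_add, neg_add_cancel, exp_zero, mul_one]

theorem exists_int_integral_eq_two_pi_mul_of_rotation {a b τ : ℝ → ℝ} {ℓ : ℝ}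
    (hτ : Continuous τ) (ha : ∀ t, HasDerivAt a (-(τ t * b t)) t)
    (hb : ∀ t, HasDerivAt b (τ t * a t) t) (haℓ : a ℓ = a 0) (hbℓ : b ℓ = b 0)
    (h0 : a 0 ≠ 0 ∨ b 0 ≠ 0) :
    ∃ n : ℤ, ∫ t in (0:ℝ)..ℓ, τ t = 2 * Real.pi * n := by
  set z : ℝ → ℂ := fun t => (a t : ℂ) + b t * I
  have hz : ∀ t, HasDerivAt z (τ t * I * z t) t := fun t => by
    refine ((ha t).ofReal_comp.fun_add ((hb t).ofReal_comp.mul_const I)).congr_deriv ?_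
    push_cast
    linear_combination -((τ t : ℂ) * b t) * I_mul_I
  have hz0 : z 0 ≠ 0 := fun h => by
    have hre := congrArg re h
    have him := congrArg im h
    simp only [z, add_re, add_im, ofReal_re, ofReal_im, mul_I_re, mul_I_im, zero_re,
      zero_im] at hre him
    rcases h0 with h0 | h0 <;> simp_all
  have hexp : cexp ((∫ t in (0:ℝ)..ℓ, τ t : ℝ) * I) = 1 := by
    have h := eq_mul_cexp_integral_of_hasDerivAt (by fun_prop) hz ℓ
    rw [show z ℓ = z 0 by simp only [z, haℓ, hbℓ], intervalIntegral.integral_mul_const,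
      intervalIntegral.integral_ofReal] at h
    exact (mul_eq_left₀ hz0).mp h.symm
  obtain ⟨n, hn⟩ := exp_eq_one_iff.mp hexp
  refine ⟨n, ?_⟩
  have : ((∫ t in (0:ℝ)..ℓ, τ t : ℝ) : ℂ) = (2 * Real.pi * n : ℝ) := by
    apply mul_right_cancel₀ I_ne_zero
    push_cast
    linear_combination hn
  exact_mod_cast this

theorem total_torsion_of_wellPositioned_line_of_curvature_general
    (m : ℕ)
    (γ : ℝ → EuclideanSpace ℝ (Fin m)) (ℓ : ℝ)
    (hsmooth : ContDiff ℝ (⊤ : ℕ∞) γ)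
    (hunit : ∀ t, ‖deriv γ t‖ = 1)
    (hcurv : ∀ t, ‖deriv (deriv γ) t‖ > 0)
    (P : ℝ → EuclideanSpace ℝ (Fin m))
    (hP : ∀ t, P t = ‖deriv (deriv γ) t‖⁻¹ • deriv (deriv γ) t)
    (τ : ℝ → ℝ) (hτsmooth : ContDiff ℝ (⊤ : ℕ∞) τ)
    (H₁ : ℝ → EuclideanSpace ℝ (Fin m))
    (hH₁smooth : ContDiff ℝ (⊤ : ℕ∞) H₁)
    (hH₁γ : ∀ t, ⟪H₁ t, deriv γ t⟫ = 0)
    (hFrenetP : ∀ t, deriv P t =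
      -‖deriv (deriv γ) t‖ • deriv γ t - τ t • H₁ t)
    (hFrenetH₁ : ∀ t, deriv H₁ t = τ t • P t)
    (hPclosed : ∀ t, P (t + ℓ) = P t)
    (hH₁closed : ∀ t, H₁ (t + ℓ) = H₁ t)
    (N : ℝ → EuclideanSpace ℝ (Fin m))
    (hNsmooth : ContDiff ℝ (⊤ : ℕ∞) N)
    (hNclosed : ∀ t, N (t + ℓ) = N t)
    (hNunit : ∀ t, ‖N t‖ = 1)
    (hNorth : ∀ t, ⟪N t, deriv γ t⟫ = 0)
    (hRodrigues : ∀ t, ∃ c : ℝ, deriv N t = c • deriv γ t)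
    (hwellPositioned : ∀ t, N t ∈ Submodule.span ℝ {P t, H₁ t}) :
    ∃ n : ℤ, ∫ t in (0:ℝ)..ℓ, τ t = 2 * Real.pi * n := by
  have hγ' : ContDiff ℝ (⊤ : ℕ∞) (deriv γ) := (contDiff_infty_iff_deriv.mp hsmooth).2
  have hγ'' : Differentiable ℝ (deriv (deriv γ)) :=
    (contDiff_infty_iff_deriv.mp hγ').2.differentiable (by simp)
  have hPdiff : Differentiable ℝ P := fun t => by
    have hκ : deriv (deriv γ) t ≠ 0 := norm_pos_iff.mp (hcurv t)
    rw [funext hP]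
    exact (((hγ'' t).norm ℝ hκ).inv (hcurv t).ne').smul (hγ'' t)
  have hPγ : ∀ t, ⟪P t, deriv γ t⟫ = 0 := fun t => by
    rw [hP t, real_inner_smul_left, real_inner_comm,
      inner_deriv_eq_zero_of_norm_eq_s12 hunit (hγ'.differentiable (by simp) t), mul_zero]
  have hNdiff : Differentiable ℝ N := hNsmooth.differentiable (by simp)
  have hH₁diff : Differentiable ℝ H₁ := hH₁smooth.differentiable (by simp)
  have ha : ∀ t, HasDerivAt (fun s => ⟪P s, N s⟫) (-(τ t * ⟪H₁ t, N t⟫)) t := fun t => by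
    convert hasDerivAt_inner_of_deriv_parallel (hPdiff t).hasDerivAt (hNdiff t) (hRodrigues t)
      (hPγ t) using 1
    rw [hFrenetP t, inner_sub_left, real_inner_smul_left, real_inner_smul_left,
      real_inner_comm (N t) (deriv γ t), hNorth t]
    ring
  have hb : ∀ t, HasDerivAt (fun s => ⟪H₁ s, N s⟫) (τ t * ⟪P t, N t⟫) t := fun t => by
    convert hasDerivAt_inner_of_deriv_parallel (hH₁diff t).hasDerivAt (hNdiff t) (hRodrigues t)
      (hH₁γ t) using 1
    rw [hFrenetH₁ t, real_inner_smul_left]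
  exact exists_int_integral_eq_two_pi_mul_of_rotation hτsmooth.continuous ha hb
    (by simpa using congr(⟪$(hPclosed 0), $(hNclosed 0)⟫))
    (by simpa using congr(⟪$(hH₁closed 0), $(hNclosed 0)⟫))
    (inner_ne_zero_or_inner_ne_zero_of_mem_span_pair (hwellPositioned 0)
      (norm_ne_zero_iff.mp (by simp [hNunit])))

/-- The total torsion of a closed three-dimensional curve that is a well-positioned
line of curvature of an oriented hypersurface is an integer multiple of `2π`. -/
theorem total_torsion_of_wellPositioned_line_of_curvature
    (m : ℕ) (hm : 3 ≤ m)
    (γ : ℝ → EuclideanSpace ℝ (Fin m)) (ℓ : ℝ) (hℓ : 0 < ℓ)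
    (hsmooth : ContDiff ℝ (⊤ : ℕ∞) γ)
    (hunit : ∀ t, ‖deriv γ t‖ = 1)
    (hclosed : ∀ t, γ (t + ℓ) = γ t)
    (hcurv : ∀ t, ‖deriv (deriv γ) t‖ > 0)
    (P : ℝ → EuclideanSpace ℝ (Fin m))
    (hP : ∀ t, P t = ‖deriv (deriv γ) t‖⁻¹ • deriv (deriv γ) t)
    (τ : ℝ → ℝ) (hτsmooth : ContDiff ℝ (⊤ : ℕ∞) τ)
    (H₁ : ℝ → EuclideanSpace ℝ (Fin m))
    (hH₁smooth : ContDiff ℝ (⊤ : ℕ∞) H₁)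
    (hH₁unit : ∀ t, ‖H₁ t‖ = 1)
    (hH₁γ : ∀ t, ⟪H₁ t, deriv γ t⟫ = 0)
    (hH₁P : ∀ t, ⟪H₁ t, P t⟫ = 0)
    (hFrenetP : ∀ t, deriv P t =
      -‖deriv (deriv γ) t‖ • deriv γ t - τ t • H₁ t)
    (hFrenetH₁ : ∀ t, deriv H₁ t = τ t • P t)
    (hPclosed : ∀ t, P (t + ℓ) = P t)
    (hH₁closed : ∀ t, H₁ (t + ℓ) = H₁ t)
    (hτclosed : ∀ t, τ (t + ℓ) = τ t)
    (N : ℝ → EuclideanSpace ℝ (Fin m))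
    (hNsmooth : ContDiff ℝ (⊤ : ℕ∞) N)
    (hNclosed : ∀ t, N (t + ℓ) = N t)
    (hNunit : ∀ t, ‖N t‖ = 1)
    (hNorth : ∀ t, ⟪N t, deriv γ t⟫ = 0)
    (hRodrigues : ∀ t, ∃ c : ℝ, deriv N t = c • deriv γ t)
    (hwellPositioned : ∀ t, N t ∈ Submodule.span ℝ {P t, H₁ t}) :
    ∃ n : ℤ, ∫ t in (0:ℝ)..ℓ, τ t = 2 * Real.pi * n :=
  total_torsion_of_wellPositioned_line_of_curvature_general m γ ℓ hsmooth hunit hcurv P hP τ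
    hτsmooth H₁ hH₁smooth hH₁γ hFrenetP hFrenetH₁ hPclosed hH₁closed N hNsmooth hNclosed hNunit
    hNorth hRodrigues hwellPositioned
end

section
/- Let m ≥ 3 and let γ : ℝ → EuclideanSpace ℝ (Fin m) be a smooth unit-speed curve, closed with period ℓ > 0, which is three-dimensional with curvature κ(t) = ‖γ''(t)‖ > 0, principal normal P = γ''/κ, torsion τ, and unit field H₁, where P(t + ℓ) = P(t), H₁(t + ℓ) = H₁(t), and τ(t + ℓ) = τ(t) for all t. Suppose N is a unit normal field along γ with N(t + ℓ) = N(t), such that γ is a well-positioned line of curvature with respect to N (N'(t) is a scalar multiple of γ'(t) and N(t) ∈ span{P(t), H₁(t)} for every t), and suppose moreover that the normal curvature is positive: ⟨γ''(t), N(t)⟩ > 0 for all t (convexity). Then the total torsion vanishes: ∫₀^ℓ τ(t) dt = 0. -/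
/-!
Along a well-positioned line of curvature, `N' ∥ γ'` is orthogonal to `P` and `H₁`, so the
Frenet equations make the coordinates `a = ⟪N, P⟫`, `b = ⟪N, H₁⟫` of `N` rotate with angular
speed `τ`: `a' = -τ b`, `b' = τ a`. Convexity says `a > 0`, so the angle `arctan (b / a)` is a
smooth lift with derivative `τ`, and by periodicity of `a` and `b` its total change over a period,
which is the total torsion, is zero.
-/

open scoped RealInnerProductSpace

open Real

section Rotation

variable {a b : ℝ → ℝ}

theorem hasDerivAt_arctan_div_of_rotation {ω t : ℝ} (ha : HasDerivAt a (-(ω * b t)) t)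
    (hb : HasDerivAt b (ω * a t) t) (ha0 : a t ≠ 0) :
    HasDerivAt (fun s => arctan (b s / a s)) ω t := by
  convert (hb.fun_div ha ha0).arctan using 1
  have : a t ^ 2 + b t ^ 2 ≠ 0 := by positivity
  field_simp
  ring

theorem integral_eq_zero_of_rotation {ω : ℝ → ℝ} {ℓ : ℝ}
    (ha : ∀ t, HasDerivAt a (-(ω t * b t)) t) (hb : ∀ t, HasDerivAt b (ω t * a t) t)
    (ha0 : ∀ t, a t ≠ 0) (hω : Continuous ω) (haℓ : a ℓ = a 0) (hbℓ : b ℓ = b 0) :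
    ∫ t in (0:ℝ)..ℓ, ω t = 0 := by
  rw [intervalIntegral.integral_eq_sub_of_hasDerivAt
    (fun t _ => hasDerivAt_arctan_div_of_rotation (ha t) (hb t) (ha0 t))
    (hω.intervalIntegrable 0 ℓ)]
  simp [haℓ, hbℓ]

end Rotation

section Inner

variable {E : Type*} [NormedAddCommGroup E] [InnerProductSpace ℝ E] {f g : ℝ → E} {t : ℝ}

theorem inner_deriv_eq_zero_of_norm_eq_const {r : ℝ} (hf : DifferentiableAt ℝ f t)
    (hr : ∀ s, ‖f s‖ = r) : ⟪f t, deriv f t⟫ = 0 := by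
  have hconst : (fun s => ⟪f s, f s⟫) = fun _ => r ^ 2 := by
    funext s
    rw [real_inner_self_eq_norm_sq, hr s]
  have hderiv := hf.hasDerivAt.inner ℝ hf.hasDerivAt
  rw [hconst, real_inner_comm (f t)] at hderiv
  linarith [(hasDerivAt_const t (r ^ 2)).unique hderiv]

theorem hasDerivAt_inner_of_inner_deriv_eq_zero (hf : DifferentiableAt ℝ f t)
    (hg : DifferentiableAt ℝ g t) (h : ⟪deriv f t, g t⟫ = 0) :
    HasDerivAt (fun s => ⟪f s, g s⟫) ⟪f t, deriv g t⟫ t := by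
  simpa [h] using hf.hasDerivAt.inner ℝ hg.hasDerivAt

end Inner

theorem total_torsion_of_wellPositioned_line_of_curvature_convex_general
    (m : ℕ)
    (γ : ℝ → EuclideanSpace ℝ (Fin m)) (ℓ : ℝ)
    (hsmooth : ContDiff ℝ (⊤ : ℕ∞) γ)
    (hunit : ∀ t, ‖deriv γ t‖ = 1)
    (hcurv : ∀ t, ‖deriv (deriv γ) t‖ > 0)
    (P : ℝ → EuclideanSpace ℝ (Fin m))
    (hP : ∀ t, P t = ‖deriv (deriv γ) t‖⁻¹ • deriv (deriv γ) t)
    (τ : ℝ → ℝ) (hτsmooth : ContDiff ℝ (⊤ : ℕ∞) τ)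
    (H₁ : ℝ → EuclideanSpace ℝ (Fin m))
    (hH₁smooth : ContDiff ℝ (⊤ : ℕ∞) H₁)
    (hH₁γ : ∀ t, ⟪H₁ t, deriv γ t⟫ = 0)
    (hFrenetP : ∀ t, deriv P t =
      -‖deriv (deriv γ) t‖ • deriv γ t - τ t • H₁ t)
    (hFrenetH₁ : ∀ t, deriv H₁ t = τ t • P t)
    (hPclosed : ∀ t, P (t + ℓ) = P t)
    (hH₁closed : ∀ t, H₁ (t + ℓ) = H₁ t)
    (N : ℝ → EuclideanSpace ℝ (Fin m))
    (hNsmooth : ContDiff ℝ (⊤ : ℕ∞) N)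
    (hNclosed : ∀ t, N (t + ℓ) = N t)
    (hNorth : ∀ t, ⟪N t, deriv γ t⟫ = 0)
    (hRodrigues : ∀ t, ∃ c : ℝ, deriv N t = c • deriv γ t)
    (hconvex : ∀ t, ⟪deriv (deriv γ) t, N t⟫ > 0) :
    ∫ t in (0:ℝ)..ℓ, τ t = 0 := by
  have hγ' : ContDiff ℝ (⊤ : ℕ∞) (deriv γ) := (contDiff_infty_iff_deriv.mp hsmooth).2
  have hγ'' : Differentiable ℝ (deriv (deriv γ)) :=
    (contDiff_infty_iff_deriv.mp hγ').2.differentiable (by simp)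
  have hN : Differentiable ℝ N := hNsmooth.differentiable (by simp)
  have hPdiff (t : ℝ) : DifferentiableAt ℝ P t := by
    have h0 : deriv (deriv γ) t ≠ 0 := norm_pos_iff.mp (hcurv t)
    rw [funext hP]
    exact (((hγ'' t).norm ℝ h0).inv (norm_ne_zero_iff.mpr h0)).smul (hγ'' t)
  have hγ'P (t : ℝ) : ⟪deriv γ t, P t⟫ = 0 := by
    rw [hP t, inner_smul_right,
      inner_deriv_eq_zero_of_norm_eq_const (hγ'.differentiable (by simp) t) hunit, mul_zero]
  have hN'_perp (t : ℝ) {v : EuclideanSpace ℝ (Fin m)} (hv : ⟪deriv γ t, v⟫ = 0) :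
      ⟪deriv N t, v⟫ = 0 := by
    obtain ⟨c, hc⟩ := hRodrigues t
    rw [hc, inner_smul_left, hv, mul_zero]
  refine integral_eq_zero_of_rotation (a := fun t => ⟪N t, P t⟫) (b := fun t => ⟪N t, H₁ t⟫)
    (fun t => ?_) (fun t => ?_) (fun t => ?_) hτsmooth.continuous ?_ ?_
  · convert hasDerivAt_inner_of_inner_deriv_eq_zero (hN t) (hPdiff t) (hN'_perp t (hγ'P t))
      using 1
    rw [hFrenetP t, inner_sub_right, inner_smul_right, inner_smul_right, hNorth t]
    ring
  · convert hasDerivAt_inner_of_inner_deriv_eq_zero (hN t) (hH₁smooth.differentiable (by simp) t)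
      (hN'_perp t (by rw [real_inner_comm, hH₁γ t])) using 1
    rw [hFrenetH₁ t, inner_smul_right]
  · have : ⟪N t, P t⟫ = ‖deriv (deriv γ) t‖⁻¹ * ⟪deriv (deriv γ) t, N t⟫ := by
      rw [hP t, inner_smul_right, real_inner_comm]
    exact this ▸ (mul_pos (inv_pos.mpr (hcurv t)) (hconvex t)).ne'
  · show ⟪N ℓ, P ℓ⟫ = ⟪N 0, P 0⟫
    rw [← zero_add ℓ, hNclosed, hPclosed]
  · show ⟪N ℓ, H₁ ℓ⟫ = ⟪N 0, H₁ 0⟫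
    rw [← zero_add ℓ, hNclosed, hH₁closed]

/-- The total torsion of a closed three-dimensional curve that is a well-positioned
line of curvature of a *convex* oriented hypersurface vanishes. -/
theorem total_torsion_of_wellPositioned_line_of_curvature_convex
    (m : ℕ) (hm : 3 ≤ m)
    (γ : ℝ → EuclideanSpace ℝ (Fin m)) (ℓ : ℝ) (hℓ : 0 < ℓ)
    (hsmooth : ContDiff ℝ (⊤ : ℕ∞) γ)
    (hunit : ∀ t, ‖deriv γ t‖ = 1)
    (hclosed : ∀ t, γ (t + ℓ) = γ t)
    (hcurv : ∀ t, ‖deriv (deriv γ) t‖ > 0)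
    (P : ℝ → EuclideanSpace ℝ (Fin m))
    (hP : ∀ t, P t = ‖deriv (deriv γ) t‖⁻¹ • deriv (deriv γ) t)
    (τ : ℝ → ℝ) (hτsmooth : ContDiff ℝ (⊤ : ℕ∞) τ)
    (H₁ : ℝ → EuclideanSpace ℝ (Fin m))
    (hH₁smooth : ContDiff ℝ (⊤ : ℕ∞) H₁)
    (hH₁unit : ∀ t, ‖H₁ t‖ = 1)
    (hH₁γ : ∀ t, ⟪H₁ t, deriv γ t⟫ = 0)
    (hH₁P : ∀ t, ⟪H₁ t, P t⟫ = 0)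
    (hFrenetP : ∀ t, deriv P t =
      -‖deriv (deriv γ) t‖ • deriv γ t - τ t • H₁ t)
    (hFrenetH₁ : ∀ t, deriv H₁ t = τ t • P t)
    (hPclosed : ∀ t, P (t + ℓ) = P t)
    (hH₁closed : ∀ t, H₁ (t + ℓ) = H₁ t)
    (hτclosed : ∀ t, τ (t + ℓ) = τ t)
    (N : ℝ → EuclideanSpace ℝ (Fin m))
    (hNsmooth : ContDiff ℝ (⊤ : ℕ∞) N)
    (hNclosed : ∀ t, N (t + ℓ) = N t)
    (hNunit : ∀ t, ‖N t‖ = 1)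
    (hNorth : ∀ t, ⟪N t, deriv γ t⟫ = 0)
    (hRodrigues : ∀ t, ∃ c : ℝ, deriv N t = c • deriv γ t)
    (hwellPositioned : ∀ t, N t ∈ Submodule.span ℝ {P t, H₁ t})
    (hconvex : ∀ t, ⟪deriv (deriv γ) t, N t⟫ > 0) :
    ∫ t in (0:ℝ)..ℓ, τ t = 0 :=
  total_torsion_of_wellPositioned_line_of_curvature_convex_general m γ ℓ hsmooth hunit hcurv P hP τ
    hτsmooth H₁ hH₁smooth hH₁γ hFrenetP hFrenetH₁ hPclosed hH₁closed N hNsmooth hNclosed hNorth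
    hRodrigues hconvex
end

section
/- Let m ≥ 3 and let γ : ℝ → EuclideanSpace ℝ (Fin m) be a smooth unit-speed curve, closed with period ℓ > 0, which is three-dimensional with curvature κ(t) = ‖γ''(t)‖ > 0, principal normal P = γ''/κ, torsion τ, and unit field H₁, where P(t + ℓ) = P(t), H₁(t + ℓ) = H₁(t), and τ(t + ℓ) = τ(t) for all t. If ∫₀^ℓ τ(t) dt = 2πn for some integer n, then there exists a smooth map N : ℝ → EuclideanSpace ℝ (Fin m) with N(t + ℓ) = N(t), ‖N(t)‖ = 1, ⟨N(t), γ'(t)⟩ = 0 for all t, such that N'(t) is a scalar multiple of γ'(t) and N(t) ∈ span{P(t), H₁(t)} for every t; that is, γ appears as a well-positioned line of curvature of an oriented hypersurface. -/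
/-!
Rotate the pair `(P, H₁)` in its own plane by the angle `θ(t) = ∫₀ᵗ τ`, i.e. take
`N = cos θ • P + sin θ • H₁`. The Frenet equations `P' = -κ γ' - τ H₁`, `H₁' = τ P` give
`N' = -κ cos θ • γ'`: the rotation exactly absorbs the torsion. Since `θ(t + ℓ) = θ(t) + 2πn`,
the field `N` is again `ℓ`-periodic.
-/

open scoped RealInnerProductSpace ContDiff

open Real

theorem contDiff_intervalIntegral_of_contDiff {E : Type*} [NormedAddCommGroup E]
    [NormedSpace ℝ E] [CompleteSpace E] {f : ℝ → E} {n : ℕ∞} (a : ℝ) (hf : ContDiff ℝ n f) :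
    ContDiff ℝ n (fun t => ∫ s in a..t, f s) := by
  have hderiv : ∀ t, HasDerivAt (fun t => ∫ s in a..t, f s) (f t) t := fun t =>
    (hf.continuous.integral_hasStrictDerivAt a t).hasDerivAt
  have hsucc : ContDiff ℝ (n + 1) (fun t => ∫ s in a..t, f s) := by
    refine contDiff_succ_iff_deriv.2 ⟨fun t => (hderiv t).differentiableAt, by simp, ?_⟩
    rwa [funext fun t => (hderiv t).deriv]
  exact hsucc.of_le le_self_add

section InnerProductSpace

variable {E : Type*} [NormedAddCommGroup E] [InnerProductSpace ℝ E]

theorem HasDerivAt.inner_eq_zero_of_norm_eq {f : ℝ → E} {f' : E} {t c : ℝ}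
    (hf : HasDerivAt f f' t) (hc : ∀ s, ‖f s‖ = c) : ⟪f t, f'⟫ = 0 := by
  have hconst : HasDerivAt (fun s => ‖f s‖ ^ 2) 0 t := by
    simpa only [hc] using hasDerivAt_const t (c ^ 2)
  have h := hf.norm_sq.unique hconst
  linarith

theorem norm_cos_smul_add_sin_smul {u v : E} (hu : ‖u‖ = 1) (hv : ‖v‖ = 1) (huv : ⟪u, v⟫ = 0)
    (θ : ℝ) : ‖cos θ • u + sin θ • v‖ = 1 := by
  have horth : ⟪cos θ • u, sin θ • v⟫ = 0 := by
    rw [real_inner_smul_left, real_inner_smul_right, huv, mul_zero, mul_zero]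
  have hsq : ‖cos θ • u + sin θ • v‖ ^ 2 = 1 := by
    rw [sq, norm_add_sq_eq_norm_sq_add_norm_sq_real horth, norm_smul, norm_smul, hu, hv,
      norm_eq_abs, norm_eq_abs]
    nlinarith [sq_abs (cos θ), sq_abs (sin θ), sin_sq_add_cos_sq θ]
  exact (pow_eq_one_iff_of_nonneg (norm_nonneg _) two_ne_zero).1 hsq

theorem HasDerivAt.cos_smul_add_sin_smul {θ : ℝ → ℝ} {u v : ℝ → E} {θ' t : ℝ} {u' v' : E}
    (hθ : HasDerivAt θ θ' t) (hu : HasDerivAt u u' t) (hv : HasDerivAt v v' t) :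
    HasDerivAt (fun s => Real.cos (θ s) • u s + Real.sin (θ s) • v s)
      (Real.cos (θ t) • (u' + θ' • v t) + Real.sin (θ t) • (v' - θ' • u t)) t :=
  ((hθ.cos.smul hu).add (hθ.sin.smul hv)).congr_deriv (by module)

/-- Takes the junk value `0` where `γ'' = 0`. -/
noncomputable def principalNormal (γ : ℝ → E) (t : ℝ) : E :=
  ‖deriv (deriv γ) t‖⁻¹ • deriv (deriv γ) t

theorem contDiff_principalNormal {γ : ℝ → E} (hγ : ContDiff ℝ ∞ γ)
    (hγ'' : ∀ t, deriv (deriv γ) t ≠ 0) : ContDiff ℝ ∞ (principalNormal γ) := by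
  have hacc : ContDiff ℝ ∞ (deriv (deriv γ)) :=
    (contDiff_infty_iff_deriv.1 (contDiff_infty_iff_deriv.1 hγ).2).2
  exact ((hacc.norm ℝ hγ'').inv fun t => norm_ne_zero_iff.2 (hγ'' t)).smul hacc

theorem norm_principalNormal {γ : ℝ → E} {t : ℝ} (hγ'' : deriv (deriv γ) t ≠ 0) :
    ‖principalNormal γ t‖ = 1 :=
  norm_smul_inv_norm hγ''

theorem inner_principalNormal_deriv {γ : ℝ → E} {t : ℝ}
    (hγ' : DifferentiableAt ℝ (deriv γ) t) (hunit : ∀ s, ‖deriv γ s‖ = 1) :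
    ⟪principalNormal γ t, deriv γ t⟫ = 0 := by
  rw [principalNormal, real_inner_smul_left, real_inner_comm,
    hγ'.hasDerivAt.inner_eq_zero_of_norm_eq hunit, mul_zero]

end InnerProductSpace

theorem exists_wellPositioned_line_of_curvature_of_closed_curve_general
    (m : ℕ)
    (γ : ℝ → EuclideanSpace ℝ (Fin m)) (ℓ : ℝ)
    (hsmooth : ContDiff ℝ (⊤ : ℕ∞) γ)
    (hunit : ∀ t, ‖deriv γ t‖ = 1)
    (hcurv : ∀ t, ‖deriv (deriv γ) t‖ > 0)
    (P : ℝ → EuclideanSpace ℝ (Fin m))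
    (hP : ∀ t, P t = ‖deriv (deriv γ) t‖⁻¹ • deriv (deriv γ) t)
    (τ : ℝ → ℝ) (hτsmooth : ContDiff ℝ (⊤ : ℕ∞) τ)
    (H₁ : ℝ → EuclideanSpace ℝ (Fin m))
    (hH₁smooth : ContDiff ℝ (⊤ : ℕ∞) H₁)
    (hH₁unit : ∀ t, ‖H₁ t‖ = 1)
    (hH₁γ : ∀ t, ⟪H₁ t, deriv γ t⟫ = 0)
    (hH₁P : ∀ t, ⟪H₁ t, P t⟫ = 0)
    (hFrenetP : ∀ t, deriv P t =
      -‖deriv (deriv γ) t‖ • deriv γ t - τ t • H₁ t)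
    (hFrenetH₁ : ∀ t, deriv H₁ t = τ t • P t)
    (hPclosed : ∀ t, P (t + ℓ) = P t)
    (hH₁closed : ∀ t, H₁ (t + ℓ) = H₁ t)
    (hτclosed : ∀ t, τ (t + ℓ) = τ t)
    (n : ℤ) (htotal : ∫ t in (0:ℝ)..ℓ, τ t = 2 * Real.pi * n) :
    ∃ N : ℝ → EuclideanSpace ℝ (Fin m),
      ContDiff ℝ (⊤ : ℕ∞) N ∧
      (∀ t, N (t + ℓ) = N t) ∧
      (∀ t, ‖N t‖ = 1) ∧
      (∀ t, ⟪N t, deriv γ t⟫ = 0) ∧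
      (∀ t, ∃ c : ℝ, deriv N t = c • deriv γ t) ∧
      (∀ t, N t ∈ Submodule.span ℝ {P t, H₁ t}) := by
  obtain rfl : P = principalNormal γ := funext hP
  have hγ'' : ∀ t, deriv (deriv γ) t ≠ 0 := fun t => norm_pos_iff.1 (hcurv t)
  have hP_smooth := contDiff_principalNormal hsmooth hγ''
  have hγ' : Differentiable ℝ (deriv γ) :=
    (contDiff_infty_iff_deriv.1 hsmooth).2.differentiable (by simp)
  set θ : ℝ → ℝ := fun t => ∫ s in (0:ℝ)..t, τ s
  have hθ : ∀ t, HasDerivAt θ (τ t) t := fun t =>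
    (hτsmooth.continuous.integral_hasStrictDerivAt 0 t).hasDerivAt
  have hθ_smooth : ContDiff ℝ ∞ θ := contDiff_intervalIntegral_of_contDiff 0 hτsmooth
  have hθ_add_period : ∀ t, θ (t + ℓ) = θ t + n * (2 * π) := fun t => by
    simp only [θ]
    rw [Function.Periodic.intervalIntegral_add_eq_add hτclosed 0 t
      fun a b => hτsmooth.continuous.intervalIntegrable a b, zero_add, htotal]
    ring
  refine ⟨fun t => cos (θ t) • principalNormal γ t + sin (θ t) • H₁ t, ?_, fun t => ?_,
    fun t => ?_, fun t => ?_, fun t => ⟨-(‖deriv (deriv γ) t‖ * cos (θ t)), ?_⟩,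
    fun t => Submodule.mem_span_pair.2 ⟨_, _, rfl⟩⟩
  · exact ((contDiff_cos.comp hθ_smooth).smul hP_smooth).add
      ((contDiff_sin.comp hθ_smooth).smul hH₁smooth)
  · simp only [hθ_add_period, hPclosed, hH₁closed, cos_add_int_mul_two_pi,
      sin_add_int_mul_two_pi]
  · exact norm_cos_smul_add_sin_smul (norm_principalNormal (hγ'' t)) (hH₁unit t)
      (by rw [real_inner_comm, hH₁P]) (θ t)
  · rw [inner_add_left, real_inner_smul_left, real_inner_smul_left,
      inner_principalNormal_deriv (hγ' t) hunit, hH₁γ, mul_zero, mul_zero, add_zero]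
  · have hN := (hθ t).cos_smul_add_sin_smul
      (hP_smooth.differentiable (by simp) t).hasDerivAt
      (hH₁smooth.differentiable (by simp) t).hasDerivAt
    rw [hN.deriv, hFrenetP, hFrenetH₁]
    module

/-- A closed three-dimensional curve whose total torsion is an integer multiple of `2π`
appears as a well-positioned line of curvature of an oriented hypersurface. -/
theorem exists_wellPositioned_line_of_curvature_of_closed_curve
    (m : ℕ) (hm : 3 ≤ m)
    (γ : ℝ → EuclideanSpace ℝ (Fin m)) (ℓ : ℝ) (hℓ : 0 < ℓ)
    (hsmooth : ContDiff ℝ (⊤ : ℕ∞) γ)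
    (hunit : ∀ t, ‖deriv γ t‖ = 1)
    (hclosed : ∀ t, γ (t + ℓ) = γ t)
    (hcurv : ∀ t, ‖deriv (deriv γ) t‖ > 0)
    (P : ℝ → EuclideanSpace ℝ (Fin m))
    (hP : ∀ t, P t = ‖deriv (deriv γ) t‖⁻¹ • deriv (deriv γ) t)
    (τ : ℝ → ℝ) (hτsmooth : ContDiff ℝ (⊤ : ℕ∞) τ)
    (H₁ : ℝ → EuclideanSpace ℝ (Fin m))
    (hH₁smooth : ContDiff ℝ (⊤ : ℕ∞) H₁)
    (hH₁unit : ∀ t, ‖H₁ t‖ = 1)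
    (hH₁γ : ∀ t, ⟪H₁ t, deriv γ t⟫ = 0)
    (hH₁P : ∀ t, ⟪H₁ t, P t⟫ = 0)
    (hFrenetP : ∀ t, deriv P t =
      -‖deriv (deriv γ) t‖ • deriv γ t - τ t • H₁ t)
    (hFrenetH₁ : ∀ t, deriv H₁ t = τ t • P t)
    (hPclosed : ∀ t, P (t + ℓ) = P t)
    (hH₁closed : ∀ t, H₁ (t + ℓ) = H₁ t)
    (hτclosed : ∀ t, τ (t + ℓ) = τ t)
    (n : ℤ) (htotal : ∫ t in (0:ℝ)..ℓ, τ t = 2 * Real.pi * n) :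
    ∃ N : ℝ → EuclideanSpace ℝ (Fin m),
      ContDiff ℝ (⊤ : ℕ∞) N ∧
      (∀ t, N (t + ℓ) = N t) ∧
      (∀ t, ‖N t‖ = 1) ∧
      (∀ t, ⟪N t, deriv γ t⟫ = 0) ∧
      (∀ t, ∃ c : ℝ, deriv N t = c • deriv γ t) ∧
      (∀ t, N t ∈ Submodule.span ℝ {P t, H₁ t}) :=
  exists_wellPositioned_line_of_curvature_of_closed_curve_general m γ ℓ hsmooth hunit hcurv P hP τ
    hτsmooth H₁ hH₁smooth hH₁unit hH₁γ hH₁P hFrenetP hFrenetH₁ hPclosed hH₁closed hτclosed n htotal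
end

section
/- Let m ≥ 3 and let γ : ℝ → EuclideanSpace ℝ (Fin m) be a smooth unit-speed curve which is three-dimensional with curvature κ(t) = ‖γ''(t)‖ > 0, principal normal P = γ''/κ, torsion τ, and unit field H₁. Then there exists a smooth map N : ℝ → EuclideanSpace ℝ (Fin m) with ‖N(t)‖ = 1 and ⟨N(t), γ'(t)⟩ = 0 for all t, such that N'(t) is a scalar multiple of γ'(t) and N(t) ∈ span{P(t), H₁(t)} for every t. (Any open three-dimensional curve appears as a well-positioned line of curvature of an oriented hypersurface; indeed N(t) = -sin(θ(t)) H₁(t) + cos(θ(t)) P(t) with θ(t) = -∫₀ᵗ τ(s) ds works.) -/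
/-!
Rotate the frame `(P, H₁)` of the normal plane by the angle `θ = -∫₀ᵗ τ`: for
`N = cos θ • P - sin θ • H₁`, the Frenet equations give
`N' = -κ cos θ • γ' + (θ' + τ) (-sin θ • P - cos θ • H₁)`, and `θ' = -τ` kills the second term.
-/

open scoped RealInnerProductSpace ContDiff
open Real

section

variable {E : Type*} [NormedAddCommGroup E] [InnerProductSpace ℝ E]

theorem inner_deriv_eq_zero_of_forall_norm_eq {f : ℝ → E} {c t : ℝ} (hf : DifferentiableAt ℝ f t)
    (h : ∀ s, ‖f s‖ = c) : ⟪f t, deriv f t⟫ = 0 := by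
  have hconst : HasDerivAt (‖f ·‖ ^ 2) 0 t := by
    simpa only [h] using hasDerivAt_const t (c ^ 2)
  simpa using hf.hasDerivAt.norm_sq.unique hconst

theorem ContDiff.norm_inv_smul {F : Type*} [NormedAddCommGroup F] [NormedSpace ℝ F]
    {n : WithTop ℕ∞} {f : F → E} (hf : ContDiff ℝ n f) (h0 : ∀ x, f x ≠ 0) :
    ContDiff ℝ n fun x => ‖f x‖⁻¹ • f x :=
  ((hf.norm ℝ h0).inv fun x => norm_ne_zero_iff.mpr (h0 x)).smul hf

theorem norm_cos_smul_sub_sin_smul {u v : E} (hu : ‖u‖ = 1) (hv : ‖v‖ = 1) (huv : ⟪u, v⟫ = 0)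
    (θ : ℝ) : ‖cos θ • u - sin θ • v‖ = 1 := by
  have hsq : ‖cos θ • u - sin θ • v‖ ^ 2 = 1 := by
    rw [norm_sub_sq_real, norm_smul, norm_smul, real_inner_smul_left, real_inner_smul_right,
      huv, hu, hv]
    simp only [norm_eq_abs, mul_pow, sq_abs]
    linear_combination cos_sq_add_sin_sq θ
  exact (pow_eq_one_iff_of_nonneg (norm_nonneg _) two_ne_zero).mp hsq

theorem HasDerivAt.cos_smul_sub_sin_smul_of_frenet {θ : ℝ → ℝ} {P H : ℝ → E} {τ a t : ℝ} {T : E}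
    (hθ : HasDerivAt θ (-τ) t) (hP : HasDerivAt P (a • T - τ • H t) t)
    (hH : HasDerivAt H (τ • P t) t) :
    HasDerivAt (fun s => Real.cos (θ s) • P s - Real.sin (θ s) • H s)
      ((a * Real.cos (θ t)) • T) t := by
  refine (((hasDerivAt_cos (θ t)).comp t hθ).smul hP |>.sub
    (((hasDerivAt_sin (θ t)).comp t hθ).smul hH)).congr_deriv ?_
  simp only [Function.comp_apply]
  module

end

theorem ContDiff.intervalIntegral_right {F : Type*} [NormedAddCommGroup F] [NormedSpace ℝ F]
    [CompleteSpace F] {f : ℝ → F} (hf : ContDiff ℝ ∞ f) (a : ℝ) :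
    ContDiff ℝ ∞ fun t => ∫ s in a..t, f s := by
  have hderiv (t : ℝ) := (hf.continuous.integral_hasStrictDerivAt a t).hasDerivAt
  rw [contDiff_infty_iff_deriv]
  refine ⟨fun t => (hderiv t).differentiableAt, ?_⟩
  rwa [funext fun t => (hderiv t).deriv]

theorem exists_wellPositioned_line_of_curvature_of_open_curve_general
    (m : ℕ)
    (γ : ℝ → EuclideanSpace ℝ (Fin m))
    (hsmooth : ContDiff ℝ (⊤ : ℕ∞) γ)
    (hunit : ∀ t, ‖deriv γ t‖ = 1)
    (hcurv : ∀ t, ‖deriv (deriv γ) t‖ > 0)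
    (P : ℝ → EuclideanSpace ℝ (Fin m))
    (hP : ∀ t, P t = ‖deriv (deriv γ) t‖⁻¹ • deriv (deriv γ) t)
    (τ : ℝ → ℝ) (hτsmooth : ContDiff ℝ (⊤ : ℕ∞) τ)
    (H₁ : ℝ → EuclideanSpace ℝ (Fin m))
    (hH₁smooth : ContDiff ℝ (⊤ : ℕ∞) H₁)
    (hH₁unit : ∀ t, ‖H₁ t‖ = 1)
    (hH₁γ : ∀ t, ⟪H₁ t, deriv γ t⟫ = 0)
    (hH₁P : ∀ t, ⟪H₁ t, P t⟫ = 0)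
    (hFrenetP : ∀ t, deriv P t =
      -‖deriv (deriv γ) t‖ • deriv γ t - τ t • H₁ t)
    (hFrenetH₁ : ∀ t, deriv H₁ t = τ t • P t) :
    ∃ N : ℝ → EuclideanSpace ℝ (Fin m),
      ContDiff ℝ (⊤ : ℕ∞) N ∧
      (∀ t, ‖N t‖ = 1) ∧
      (∀ t, ⟪N t, deriv γ t⟫ = 0) ∧
      (∀ t, ∃ c : ℝ, deriv N t = c • deriv γ t) ∧
      (∀ t, N t ∈ Submodule.span ℝ {P t, H₁ t}) := by
  have hγ' : ContDiff ℝ ∞ (deriv γ) := (contDiff_infty_iff_deriv.mp hsmooth).2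
  have hγ'' : ContDiff ℝ ∞ (deriv (deriv γ)) := (contDiff_infty_iff_deriv.mp hγ').2
  have hPsmooth : ContDiff ℝ ∞ P := by
    rw [funext hP]
    exact hγ''.norm_inv_smul fun t => norm_pos_iff.mp (hcurv t)
  have hPunit (t : ℝ) : ‖P t‖ = 1 := by
    rw [hP t, norm_smul, norm_inv, norm_norm, inv_mul_cancel₀ (hcurv t).ne']
  have hPγ (t : ℝ) : ⟪P t, deriv γ t⟫ = 0 := by
    rw [hP t, real_inner_smul_left, real_inner_comm,
      inner_deriv_eq_zero_of_forall_norm_eq (hγ'.differentiable (by simp) t) hunit, mul_zero]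
  set θ : ℝ → ℝ := fun t => -∫ s in (0 : ℝ)..t, τ s
  have hθ (t : ℝ) : HasDerivAt θ (-τ t) t :=
    (hτsmooth.continuous.integral_hasStrictDerivAt 0 t).hasDerivAt.neg
  refine ⟨fun t => cos (θ t) • P t - sin (θ t) • H₁ t, ?_, fun t => ?_, fun t => ?_,
    fun t => ⟨-‖deriv (deriv γ) t‖ * cos (θ t), ?_⟩, fun t => ?_⟩
  · have hθsmooth : ContDiff ℝ ∞ θ := (hτsmooth.intervalIntegral_right 0).neg
    exact ((contDiff_cos.comp hθsmooth).smul hPsmooth).sub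
      ((contDiff_sin.comp hθsmooth).smul hH₁smooth)
  · exact norm_cos_smul_sub_sin_smul (hPunit t) (hH₁unit t)
      (by rw [real_inner_comm, hH₁P]) (θ t)
  · rw [inner_sub_left, real_inner_smul_left, real_inner_smul_left, hPγ t, hH₁γ t]
    ring
  · have hPd := (hPsmooth.differentiable (by simp) t).hasDerivAt
    have hHd := (hH₁smooth.differentiable (by simp) t).hasDerivAt
    rw [hFrenetP t] at hPd
    rw [hFrenetH₁ t] at hHd
    exact ((hθ t).cos_smul_sub_sin_smul_of_frenet hPd hHd).deriv
  · exact Submodule.mem_span_pair.mpr ⟨cos (θ t), -sin (θ t), by module⟩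

/-- Any (open) three-dimensional curve appears as a well-positioned line of curvature
of an oriented hypersurface. -/
theorem exists_wellPositioned_line_of_curvature_of_open_curve
    (m : ℕ) (hm : 3 ≤ m)
    (γ : ℝ → EuclideanSpace ℝ (Fin m))
    (hsmooth : ContDiff ℝ (⊤ : ℕ∞) γ)
    (hunit : ∀ t, ‖deriv γ t‖ = 1)
    (hcurv : ∀ t, ‖deriv (deriv γ) t‖ > 0)
    (P : ℝ → EuclideanSpace ℝ (Fin m))
    (hP : ∀ t, P t = ‖deriv (deriv γ) t‖⁻¹ • deriv (deriv γ) t)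
    (τ : ℝ → ℝ) (hτsmooth : ContDiff ℝ (⊤ : ℕ∞) τ)
    (H₁ : ℝ → EuclideanSpace ℝ (Fin m))
    (hH₁smooth : ContDiff ℝ (⊤ : ℕ∞) H₁)
    (hH₁unit : ∀ t, ‖H₁ t‖ = 1)
    (hH₁γ : ∀ t, ⟪H₁ t, deriv γ t⟫ = 0)
    (hH₁P : ∀ t, ⟪H₁ t, P t⟫ = 0)
    (hFrenetP : ∀ t, deriv P t =
      -‖deriv (deriv γ) t‖ • deriv γ t - τ t • H₁ t)
    (hFrenetH₁ : ∀ t, deriv H₁ t = τ t • P t) :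
    ∃ N : ℝ → EuclideanSpace ℝ (Fin m),
      ContDiff ℝ (⊤ : ℕ∞) N ∧
      (∀ t, ‖N t‖ = 1) ∧
      (∀ t, ⟪N t, deriv γ t⟫ = 0) ∧
      (∀ t, ∃ c : ℝ, deriv N t = c • deriv γ t) ∧
      (∀ t, N t ∈ Submodule.span ℝ {P t, H₁ t}) :=
  exists_wellPositioned_line_of_curvature_of_open_curve_general m γ hsmooth hunit hcurv P hP τ
    hτsmooth H₁ hH₁smooth hH₁unit hH₁γ hH₁P hFrenetP hFrenetH₁
end
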